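/- arXiv:2206.02227 — 8 statements merged into one kernel-verified Lean document; each statement's English description precedes it below -/
import Mathlib

section
/- For the PoS protocol with constant reward R > 0, each investor's share process (π_{k,t}, t ≥ 0) defined by π_{k,t} = (N_{t-1}/N_t)π_{k,t-1} + (R_t/N_t)1_{S_{k,t}}, where N_t = N_{t-1} + R_t and P(S_{k,t} | F_{t-1}) = π_{k,t-1}, is a martingale with respect to the natural filtration. -/
open MeasureTheory Filter Set

/-!
The new share is a convex combination of the old share, with weight `N_{t-1}/N_t`, and of the
indicator of being selected, with weight `R/N_t`; the weights sum to one because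
`N_t = N_{t-1} + R`. Conditionally on `𝓕_{t-1}` the old share is known and the indicator has
mean `π_{k,t-1}`, so the conditional expectation of the new share is `π_{k,t-1}` again.
-/

section

variable {Ω E : Type*} {m m0 : MeasurableSpace Ω} {μ : Measure Ω}
  [NormedAddCommGroup E] [NormedSpace ℝ E] [CompleteSpace E]

theorem condExp_affine_comb_eq_of_condExp_eq {X Y : Ω → E} {a b : ℝ} (hab : a + b = 1)
    (hm : m ≤ m0) [SigmaFinite (μ.trim hm)] (hX : StronglyMeasurable[m] X) (hXint : Integrable X μ)
    (hYint : Integrable Y μ) (hY : μ[Y | m] =ᵐ[μ] X) :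
    μ[a • X + b • Y | m] =ᵐ[μ] X :=
  calc μ[a • X + b • Y | m]
      =ᵐ[μ] a • μ[X | m] + b • μ[Y | m] :=
        (condExp_add (hXint.smul a) (hYint.smul b) m).trans
          ((condExp_smul a X m).add (condExp_smul b Y m))
    _ =ᵐ[μ] a • X + b • X := by
        rw [condExp_of_stronglyMeasurable hm hX hXint]
        exact (hY.const_smul b).add_left
    _ = X := by rw [← add_smul, hab, one_smul]

theorem martingale_of_succ_eq_affine_comb [IsFiniteMeasure μ] {𝓕 : Filtration ℕ m0}
    {f g : ℕ → Ω → E} (a b : ℕ → ℝ) (hab : ∀ t, a t + b t = 1)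
    (hadapted : StronglyAdapted 𝓕 f) (hfint : ∀ t, Integrable (f t) μ)
    (hgint : ∀ t, Integrable (g (t + 1)) μ) (hg : ∀ t, μ[g (t + 1) | 𝓕 t] =ᵐ[μ] f t)
    (hrec : ∀ t, f (t + 1) = a t • f t + b t • g (t + 1)) :
    Martingale f 𝓕 μ :=
  martingale_nat hadapted hfint fun t => by
    rw [hrec t]
    exact (condExp_affine_comb_eq_of_condExp_eq (hab t) (𝓕.le t) (hadapted t) (hfint t)
      (hgint t) (hg t)).symm

end

theorem pos_of_succ_eq_add {N : ℕ → ℝ} {R : ℝ} (hR : 0 ≤ R) (hN0 : 0 < N 0)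
    (hN : ∀ t, N (t + 1) = N t + R) (t : ℕ) : 0 < N t :=
  hN0.trans_le <| monotone_nat_of_le_succ (fun t => by rw [hN]; linarith) (Nat.zero_le t)

/-- For the PoS protocol with constant reward `R > 0`, each investor's share process
`π_{k,t}` defined by `π_{k,t} = (N_{t-1}/N_t) π_{k,t-1} + (R/N_t) 1_{S_{k,t}}`, where
`N_t = N_{t-1} + R` and `P(S_{k,t} | 𝓕_{t-1}) = π_{k,t-1}`, is a martingale. -/
theorem pos_share_martingale
    {Ω : Type*} {m0 : MeasurableSpace Ω} (μ : Measure Ω) [IsProbabilityMeasure μ]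
    (𝓕 : Filtration ℕ m0)
    (π : ℕ → Ω → ℝ) (S : ℕ → Set Ω) (R : ℝ) (Nt : ℕ → ℝ)
    (hR : 0 < R) (hN0 : 0 < Nt 0)
    (hNt : ∀ t, Nt (t + 1) = Nt t + R)
    (hadapted : Adapted 𝓕 π)
    (hint : ∀ t, Integrable (π t) μ)
    (hSmeas : ∀ t, MeasurableSet[𝓕 (t + 1)] (S (t + 1)))
    (hcond : ∀ t, μ[(S (t + 1)).indicator (fun _ => (1 : ℝ)) | 𝓕 t] =ᵐ[μ] π t)
    (hrec : ∀ t, π (t + 1) = fun ω =>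
      (Nt t / Nt (t + 1)) * π t ω + (R / Nt (t + 1)) * (S (t + 1)).indicator 1 ω) :
    Martingale π 𝓕 μ := by
  have hweights (t : ℕ) : Nt t / Nt (t + 1) + R / Nt (t + 1) = 1 := by
    rw [← add_div, ← hNt, div_self (pos_of_succ_eq_add hR.le hN0 hNt (t + 1)).ne']
  have hind_int (t : ℕ) : Integrable ((S (t + 1)).indicator (fun _ => (1 : ℝ))) μ :=
    (integrable_const 1).indicator (𝓕.le _ _ (hSmeas t))
  exact martingale_of_succ_eq_affine_comb (g := fun t => (S t).indicator 1) _ _ hweights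
    hadapted.stronglyAdapted hint hind_int hcond hrec
end

section
/- For the time-dependent Pólya urn with rewards R_t, an individual investor's share satisfies Var(π_{k,t}) = a_t · π_{k,0}(1 - π_{k,0}), where a_1 = (R_1/N_1)² and a_{t+1} = a_t + (R_{t+1}/N_{t+1})²(1 - a_t). -/
/-!
Write `d = R_{t+1}/N_{t+1}`, so that `π_{t+1} = (1 - d) π_t + d 1_S` where `S = S_{t+1}` and
`E[1_S | F_t] = π_t`.
Conditioning on `F_t` shows that the mean `p` is preserved, that `Cov(π_t, 1_S) = Var π_t`, and
that `Var 1_S = p(1 - p)`. Expanding the variance of the sum then gives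
`Var π_{t+1} = Var π_t + d² (p(1 - p) - Var π_t)`, the recursion of `a_t p(1 - p)` started
from `Var π_0 = 0`.
-/

open MeasureTheory Filter Set ProbabilityTheory

section

variable {Ω : Type*} {m mΩ : MeasurableSpace Ω} {μ : Measure Ω} {X : Ω → ℝ} {S : Set Ω}

lemma memLp_indicator_one [IsFiniteMeasure μ] (hS : MeasurableSet S) (p : ENNReal) :
    MemLp (S.indicator (1 : Ω → ℝ)) p μ :=
  memLp_indicator_const p hS 1 (Or.inr (measure_ne_top μ S))

lemma measureReal_eq_integral_of_condExp_indicator_eq [IsFiniteMeasure μ] (hm : m ≤ mΩ)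
    (hS : MeasurableSet S) (hcond : μ[S.indicator 1 | m] =ᵐ[μ] X) :
    μ.real S = μ[X] := by
  rw [← integral_indicator_one hS, ← integral_condExp hm]
  exact integral_congr_ae hcond

section Probability

variable [IsProbabilityMeasure μ]

lemma variance_fun_const (c : ℝ) : Var[fun _ : Ω => c; μ] = 0 := by
  simp [variance_eq_sub (memLp_const c)]

lemma variance_indicator_one (hS : MeasurableSet S) :
    Var[S.indicator 1; μ] = μ.real S * (1 - μ.real S) := by
  have hsq : S.indicator (1 : Ω → ℝ) ^ 2 = S.indicator 1 := by
    ext ω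
    by_cases h : ω ∈ S <;> simp [h]
  rw [variance_eq_sub (memLp_indicator_one hS 2), hsq, integral_indicator_one hS]
  ring

lemma covariance_eq_variance_of_condExp_eq (hm : m ≤ mΩ) {Y : Ω → ℝ} (hXm : Measurable[m] X)
    (hX : MemLp X 2 μ) (hY : MemLp Y 2 μ) (hcond : μ[Y | m] =ᵐ[μ] X) :
    cov[X, Y; μ] = Var[X; μ] := by
  have hmean : μ[Y] = μ[X] := (integral_condExp hm).symm.trans (integral_congr_ae hcond)
  have hcross : μ[X * Y] = μ[X ^ 2] := by
    rw [← integral_condExp hm]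
    refine integral_congr_ae ((condExp_mul_of_stronglyMeasurable_left hXm.stronglyMeasurable
      (hX.integrable_mul hY) (hY.integrable one_le_two)).trans ?_)
    filter_upwards [hcond] with ω hω
    simp [hω, sq]
  rw [covariance_eq_sub hX hY, variance_eq_sub hX, hcross, hmean, ← sq]

lemma integral_add_indicator_of_condExp_eq (hm : m ≤ mΩ) (hX : Integrable X μ)
    (hS : MeasurableSet S) (hcond : μ[S.indicator 1 | m] =ᵐ[μ] X) (c d : ℝ) :
    μ[fun ω => c * X ω + d * S.indicator 1 ω] = (c + d) * μ[X] := by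
  rw [integral_add (hX.const_mul c) (((memLp_indicator_one hS 1).integrable le_rfl).const_mul d),
    integral_const_mul, integral_const_mul, integral_indicator_one hS,
    measureReal_eq_integral_of_condExp_indicator_eq hm hS hcond]
  ring

lemma variance_add_indicator_of_condExp_eq (hm : m ≤ mΩ) (hXm : Measurable[m] X)
    (hX : MemLp X 2 μ) (hS : MeasurableSet S) (hcond : μ[S.indicator 1 | m] =ᵐ[μ] X)
    (c d : ℝ) :
    Var[fun ω => c * X ω + d * S.indicator 1 ω; μ] =
      (c ^ 2 + 2 * c * d) * Var[X; μ] + d ^ 2 * (μ[X] * (1 - μ[X])) := by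
  have hI : MemLp (S.indicator (1 : Ω → ℝ)) 2 μ := memLp_indicator_one hS 2
  rw [variance_fun_add (hX.const_mul c) (hI.const_mul d), variance_const_mul, variance_const_mul,
    covariance_const_mul_left, covariance_const_mul_right,
    covariance_eq_variance_of_condExp_eq hm hXm hX hI hcond, variance_indicator_one hS,
    measureReal_eq_integral_of_condExp_indicator_eq hm hS hcond]
  ring

end Probability

end

/-- For the time-dependent Pólya urn with rewards `R_t`, an individual investor's share
satisfies `Var(π_{k,t}) = a_t · π_{k,0} (1 - π_{k,0})`, where `a_1 = (R_1/N_1)²` and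
`a_{t+1} = a_t + (R_{t+1}/N_{t+1})² (1 - a_t)`. -/
theorem pos_share_variance
    {Ω : Type*} {m0 : MeasurableSpace Ω} (μ : Measure Ω) [IsProbabilityMeasure μ]
    (𝓕 : Filtration ℕ m0)
    (π : ℕ → Ω → ℝ) (S : ℕ → Set Ω) (R : ℕ → ℝ) (Nt : ℕ → ℝ) (a : ℕ → ℝ) (p : ℝ)
    (hR : ∀ t, 0 < R t) (hN0 : 0 < Nt 0)
    (hNt : ∀ t, Nt (t + 1) = Nt t + R (t + 1))
    (hadapted : Adapted 𝓕 π)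
    (hmem : ∀ t ω, π t ω ∈ Set.Icc (0 : ℝ) 1)
    (hSmeas : ∀ t, MeasurableSet[𝓕 (t + 1)] (S (t + 1)))
    (hcond : ∀ t, μ[(S (t + 1)).indicator (fun _ => (1 : ℝ)) | 𝓕 t] =ᵐ[μ] π t)
    (hrec : ∀ t, π (t + 1) = fun ω =>
      (Nt t / Nt (t + 1)) * π t ω + (R (t + 1) / Nt (t + 1)) * (S (t + 1)).indicator 1 ω)
    (hπ0 : π 0 = fun _ => p)
    (ha1 : a 1 = (R 1 / Nt 1) ^ 2)
    (harec : ∀ t ≥ 1, a (t + 1) = a t + (R (t + 1) / Nt (t + 1)) ^ 2 * (1 - a t)) :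
    ∀ t ≥ 1, variance (π t) μ = a t * (p * (1 - p)) := by
  have hN : ∀ t, 0 < Nt t := Nat.rec hN0 fun t ih => by rw [hNt]; linarith [hR (t + 1)]
  have hweights : ∀ t, Nt t / Nt (t + 1) + R (t + 1) / Nt (t + 1) = 1 := fun t => by
    rw [← add_div, ← hNt, div_self (hN (t + 1)).ne']
  have hL2 : ∀ t, MemLp (π t) 2 μ := fun t =>
    MemLp.of_bound ((hadapted t).mono (𝓕.le t) le_rfl).aestronglyMeasurable 1
      (ae_of_all _ fun ω => abs_le.2 ⟨by linarith [(hmem t ω).1], (hmem t ω).2⟩)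
  have hS : ∀ t, MeasurableSet (S (t + 1)) := fun t => 𝓕.le (t + 1) _ (hSmeas t)
  have hmean : ∀ t, μ[π t] = p := fun t => by
    induction t with
    | zero => simp [hπ0]
    | succ t ih =>
      rw [hrec, integral_add_indicator_of_condExp_eq (𝓕.le t) ((hL2 t).integrable one_le_two)
        (hS t) (hcond t), hweights, ih, one_mul]
  have hstep : ∀ t, Var[π (t + 1); μ] =
      Var[π t; μ] + (R (t + 1) / Nt (t + 1)) ^ 2 * (p * (1 - p) - Var[π t; μ]) := fun t => by
    rw [hrec, variance_add_indicator_of_condExp_eq (𝓕.le t) (hadapted t) (hL2 t) (hS t)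
      (hcond t), hmean, eq_sub_of_add_eq (hweights t)]
    ring
  intro t ht
  induction t, ht using Nat.le_induction with
  | base => rw [hstep, hπ0, variance_fun_const, ha1]; ring
  | succ t ht ih => rw [hstep, ih, harec t ht]; ring
end

section
/- For the Pólya urn with constant reward R > 0, if the initial endowment n_{k,0} = f(N) satisfies f(N) → ∞ as N → ∞, then for each ε > 0 and each time t ≥ 1 (or t = ∞), P(|π_{k,t}/π_{k,0} − 1| > ε) ≤ 5R/(4ε² f(N)), which tends to 0 as N → ∞. -/
/-!
The share `π t` is a bounded martingale: the investor wins round `t + 1` with conditional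
probability `π t`. Writing `b = R / N (t + 1)`, the pull-out property of conditional expectation
gives the exact second-moment recursion `E[π (t+1)²] = (1 - b²) E[π t²] + b² E[π t]`, so the
variance grows by at most `b² c ≤ c R (1 / N t - 1 / N (t + 1))` per round and telescopes to
`Var (π t) ≤ c R / N`, where `c = f / N` is the initial share. By bounded convergence the same bound
holds for the limit share, and Chebyshev's inequality turns `Var / (ε c)² ≤ R / (ε² f)` into the
claim.
-/

open MeasureTheory Filter Set ProbabilityTheory Topology

section BoundedRandomVariables

variable {Ω : Type*} {m0 : MeasurableSpace Ω} {μ : Measure Ω}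

theorem tendsto_integral_of_tendsto_ae_of_norm_le [IsFiniteMeasure μ] {X : ℕ → Ω → ℝ}
    {Y : Ω → ℝ} {C : ℝ} (hX : ∀ n, AEStronglyMeasurable (X n) μ) (hC : ∀ n ω, ‖X n ω‖ ≤ C)
    (hlim : ∀ᵐ ω ∂μ, Tendsto (X · ω) atTop (𝓝 (Y ω))) :
    Tendsto (fun n => ∫ ω, X n ω ∂μ) atTop (𝓝 (∫ ω, Y ω ∂μ)) :=
  tendsto_integral_of_dominated_convergence (fun _ => C) hX (integrable_const C)
    (fun n => ae_of_all μ (hC n)) hlim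

theorem memLp_of_tendsto_ae_of_mem_Icc [IsFiniteMeasure μ] {X : ℕ → Ω → ℝ} {Y : Ω → ℝ} {a b : ℝ}
    (hX : ∀ n, AEStronglyMeasurable (X n) μ) (hab : ∀ n ω, X n ω ∈ Icc a b)
    (hlim : ∀ᵐ ω ∂μ, Tendsto (X · ω) atTop (𝓝 (Y ω))) (p : ENNReal) : MemLp Y p μ :=
  memLp_of_bounded (hlim.mono fun ω h => isClosed_Icc.mem_of_tendsto h (.of_forall (hab · ω)))
    (aestronglyMeasurable_of_tendsto_ae atTop hX hlim) p

theorem tendsto_variance_of_tendsto_ae_of_mem_Icc [IsProbabilityMeasure μ] {X : ℕ → Ω → ℝ}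
    {Y : Ω → ℝ} {a b : ℝ} (hX : ∀ n, AEStronglyMeasurable (X n) μ)
    (hab : ∀ n ω, X n ω ∈ Icc a b) (hlim : ∀ᵐ ω ∂μ, Tendsto (X · ω) atTop (𝓝 (Y ω))) :
    Tendsto (fun n => variance (X n) μ) atTop (𝓝 (variance Y μ)) := by
  have hnorm n ω : ‖X n ω‖ ≤ max |a| |b| := abs_le_max_abs_abs (hab n ω).1 (hab n ω).2
  have hmean := tendsto_integral_of_tendsto_ae_of_norm_le hX hnorm hlim
  have hsq := tendsto_integral_of_tendsto_ae_of_norm_le (fun n => (hX n).pow 2)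
    (fun n ω => by rw [Pi.pow_apply, norm_pow]; exact pow_le_pow_left₀ (norm_nonneg _) (hnorm n ω) 2)
    (hlim.mono fun ω h => h.pow 2)
  simp only [fun n => variance_eq_sub (memLp_of_bounded (ae_of_all μ (hab n)) (hX n) 2),
    variance_eq_sub (memLp_of_tendsto_ae_of_mem_Icc hX hab hlim 2)]
  exact hsq.sub (hmean.pow 2)

theorem measureReal_lt_abs_div_sub_one_le [IsFiniteMeasure μ] {X : Ω → ℝ} {c ε B : ℝ}
    (hX : MemLp X 2 μ) (hmean : μ[X] = c) (hvar : variance X μ ≤ B) (hc : 0 < c) (hε : 0 < ε) :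
    μ.real {ω | ε < |X ω / c - 1|} ≤ B / (ε * c) ^ 2 := by
  have hsub : {ω | ε < |X ω / c - 1|} ⊆ {ω | ε * c ≤ |X ω - μ[X]|} := by
    intro ω hω
    have : |X ω / c - 1| = |X ω - c| / c := by
      rw [← abs_of_pos hc, ← abs_div, abs_of_pos hc, sub_div, div_self hc.ne']
    simp only [mem_ofPred_eq, this, lt_div_iff₀ hc, hmean] at hω ⊢
    exact hω.le
  have hB : 0 ≤ B / (ε * c) ^ 2 := div_nonneg ((variance_nonneg X μ).trans hvar) (sq_nonneg _)
  refine ENNReal.toReal_le_of_le_ofReal hB ((measure_mono hsub).trans ?_)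
  exact (meas_ge_le_variance_div_sq hX (by positivity)).trans (ENNReal.ofReal_le_ofReal (by gcongr))

end BoundedRandomVariables

section PolyaUrn

variable {Ω : Type*} {m0 : MeasurableSpace Ω}

/-- `π t` is the investor's share and `N t` the total number of coins after `t` rounds;
`S (t + 1)` is the event that the investor wins the reward `R` of round `t + 1`. -/
structure IsPolyaUrn (μ : Measure Ω) (𝓕 : Filtration ℕ m0) (π : ℕ → Ω → ℝ) (S : ℕ → Set Ω)
    (R : ℝ) (N : ℕ → ℝ) : Prop where
  reward_nonneg : 0 ≤ R
  size_zero_pos : 0 < N 0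
  size_succ : ∀ t, N (t + 1) = N t + R
  adapted : Adapted 𝓕 π
  mem_Icc : ∀ t ω, π t ω ∈ Icc (0 : ℝ) 1
  measurableSet_draw : ∀ t, MeasurableSet[𝓕 (t + 1)] (S (t + 1))
  condExp_draw : ∀ t, μ[(S (t + 1)).indicator (1 : Ω → ℝ) | 𝓕 t] =ᵐ[μ] π t
  share_succ : ∀ t, π (t + 1) = fun ω =>
    N t / N (t + 1) * π t ω + R / N (t + 1) * (S (t + 1)).indicator 1 ω

namespace IsPolyaUrn

variable {μ : Measure Ω} {𝓕 : Filtration ℕ m0} {π : ℕ → Ω → ℝ} {S : ℕ → Set Ω} {R : ℝ}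
  {N : ℕ → ℝ}

theorem size_pos (h : IsPolyaUrn μ 𝓕 π S R N) (t : ℕ) : 0 < N t := by
  induction t with
  | zero => exact h.size_zero_pos
  | succ t ih => rw [h.size_succ]; linarith [h.reward_nonneg]

theorem sq_reward_div_size_le (h : IsPolyaUrn μ 𝓕 π S R N) (t : ℕ) :
    (R / N (t + 1)) ^ 2 ≤ R * (1 / N t - 1 / N (t + 1)) := by
  have hN := h.size_pos t
  have hN' : 0 < N (t + 1) := h.size_pos (t + 1)
  have hsub : R * (1 / N t - 1 / N (t + 1)) = R ^ 2 / (N t * N (t + 1)) := by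
    rw [h.size_succ] at hN' ⊢
    field_simp
    ring
  rw [hsub, div_pow, sq (N (t + 1))]
  gcongr
  rw [h.size_succ]
  linarith [h.reward_nonneg]

theorem stronglyMeasurable_share (h : IsPolyaUrn μ 𝓕 π S R N) (t : ℕ) :
    StronglyMeasurable (π t) :=
  ((h.adapted t).mono (𝓕.le t) le_rfl).stronglyMeasurable

theorem norm_share_le_one (h : IsPolyaUrn μ 𝓕 π S R N) (t : ℕ) (ω : Ω) : ‖π t ω‖ ≤ 1 := by
  rw [Real.norm_of_nonneg (h.mem_Icc t ω).1]
  exact (h.mem_Icc t ω).2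

theorem memLp_share [IsFiniteMeasure μ] (h : IsPolyaUrn μ 𝓕 π S R N) (t : ℕ) (p : ENNReal) :
    MemLp (π t) p μ :=
  memLp_of_bounded (ae_of_all μ (h.mem_Icc t)) (h.stronglyMeasurable_share t).aestronglyMeasurable p

theorem integrable_share [IsFiniteMeasure μ] (h : IsPolyaUrn μ 𝓕 π S R N) (t : ℕ) :
    Integrable (π t) μ :=
  (h.memLp_share t 1).integrable le_rfl

theorem integrable_draw [IsFiniteMeasure μ] (h : IsPolyaUrn μ 𝓕 π S R N) (t : ℕ) :
    Integrable ((S (t + 1)).indicator (1 : Ω → ℝ)) μ :=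
  (integrable_const 1).indicator (𝓕.le (t + 1) _ (h.measurableSet_draw t))

theorem integral_mul_draw [IsFiniteMeasure μ] (h : IsPolyaUrn μ 𝓕 π S R N) (t : ℕ) {g : Ω → ℝ}
    {C : ℝ} (hg : StronglyMeasurable[𝓕 t] g) (hC : ∀ ω, ‖g ω‖ ≤ C) :
    ∫ ω, g ω * (S (t + 1)).indicator 1 ω ∂μ = ∫ ω, g ω * π t ω ∂μ := by
  have hgI : Integrable (fun ω => g ω * (S (t + 1)).indicator 1 ω) μ :=
    (h.integrable_draw t).bdd_mul (hg.mono (𝓕.le t)).aestronglyMeasurable (ae_of_all μ hC)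
  calc ∫ ω, g ω * (S (t + 1)).indicator 1 ω ∂μ
      = ∫ ω, (μ[g * (S (t + 1)).indicator 1 | 𝓕 t]) ω ∂μ := (integral_condExp (𝓕.le t)).symm
    _ = ∫ ω, g ω * π t ω ∂μ := integral_congr_ae <|
      (condExp_mul_of_stronglyMeasurable_left hg hgI (h.integrable_draw t)).trans
        ((h.condExp_draw t).mono fun ω hω => by simp only [Pi.mul_apply, hω])

theorem integral_draw [IsFiniteMeasure μ] (h : IsPolyaUrn μ 𝓕 π S R N) (t : ℕ) :
    ∫ ω, (S (t + 1)).indicator 1 ω ∂μ = ∫ ω, π t ω ∂μ := by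
  simpa only [one_mul] using h.integral_mul_draw t (g := fun _ => 1) stronglyMeasurable_const
    (fun _ => norm_one.le)

theorem integral_share_succ [IsFiniteMeasure μ] (h : IsPolyaUrn μ 𝓕 π S R N) (t : ℕ) :
    ∫ ω, π (t + 1) ω ∂μ = ∫ ω, π t ω ∂μ := by
  have hN := h.size_pos (t + 1)
  rw [h.share_succ t, integral_add ((h.integrable_share t).const_mul _)
    ((h.integrable_draw t).const_mul _), integral_const_mul, integral_const_mul, h.integral_draw,
    ← add_mul, ← add_div, ← h.size_succ, div_self hN.ne', one_mul]

theorem integral_share [IsFiniteMeasure μ] (h : IsPolyaUrn μ 𝓕 π S R N) (t : ℕ) :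
    ∫ ω, π t ω ∂μ = ∫ ω, π 0 ω ∂μ := by
  induction t with
  | zero => rfl
  | succ t ih => rw [h.integral_share_succ, ih]

theorem integral_sq_share_succ [IsFiniteMeasure μ] (h : IsPolyaUrn μ 𝓕 π S R N) (t : ℕ) :
    ∫ ω, π (t + 1) ω ^ 2 ∂μ
      = (1 - (R / N (t + 1)) ^ 2) * ∫ ω, π t ω ^ 2 ∂μ + (R / N (t + 1)) ^ 2 * ∫ ω, π t ω ∂μ := by
  set I := (S (t + 1)).indicator (1 : Ω → ℝ)
  set b := R / N (t + 1)
  have ha : N t / N (t + 1) = 1 - b := by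
    rw [eq_sub_iff_add_eq, ← add_div, ← h.size_succ, div_self (h.size_pos (t + 1)).ne']
  have hI : ∀ ω, I ω ^ 2 = I ω := fun ω => by
    by_cases hω : ω ∈ S (t + 1) <;> simp [I, hω]
  have hexpand : (fun ω => π (t + 1) ω ^ 2)
      = fun ω => (1 - b) ^ 2 * π t ω ^ 2 + (2 * (1 - b) * b * (π t ω * I ω) + b ^ 2 * I ω) := by
    funext ω
    rw [h.share_succ, ha]
    linear_combination b ^ 2 * hI ω
  have hπI : Integrable (fun ω => π t ω * I ω) μ :=
    (h.integrable_draw t).bdd_mul (h.stronglyMeasurable_share t).aestronglyMeasurable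
      (ae_of_all μ (h.norm_share_le_one t))
  rw [hexpand, integral_add ((h.memLp_share t 2).integrable_sq.const_mul _)
    ((hπI.const_mul _).fun_add ((h.integrable_draw t).const_mul _)),
    integral_add (hπI.const_mul _) ((h.integrable_draw t).const_mul _), integral_const_mul,
    integral_const_mul, integral_const_mul, h.integral_draw,
    h.integral_mul_draw t (h.adapted t).stronglyMeasurable (h.norm_share_le_one t)]
  simp only [← sq]
  ring

theorem variance_share_le [IsProbabilityMeasure μ] (h : IsPolyaUrn μ 𝓕 π S R N) (t : ℕ) :
    variance (π t) μ ≤ variance (π 0) μ + (∫ ω, π 0 ω ∂μ) * R * (1 / N 0 - 1 / N t) := by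
  induction t with
  | zero => simp
  | succ t ih =>
    have hm : 0 ≤ ∫ ω, π 0 ω ∂μ := integral_nonneg fun ω => (h.mem_Icc 0 ω).1
    have hM : 0 ≤ ∫ ω, π t ω ^ 2 ∂μ := integral_nonneg fun ω => sq_nonneg _
    rw [variance_eq_sub (h.memLp_share t 2)] at ih
    rw [variance_eq_sub (h.memLp_share (t + 1) 2)]
    simp only [Pi.pow_apply] at ih ⊢
    rw [h.integral_share t] at ih
    rw [h.integral_sq_share_succ, h.integral_share_succ, h.integral_share t]
    -- with `b = R / N (t + 1)`: `Var (π (t + 1)) = Var (π t) - b² E[π t ^ 2] + b² E[π 0]`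
    nlinarith [mul_le_mul_of_nonneg_left (h.sq_reward_div_size_le t) hm,
      mul_nonneg (sq_nonneg (R / N (t + 1))) hM]

theorem variance_share_le_of_eq_const [IsProbabilityMeasure μ] (h : IsPolyaUrn μ 𝓕 π S R N)
    {c : ℝ} (h0 : π 0 = fun _ => c) (t : ℕ) : variance (π t) μ ≤ c * R / N 0 := by
  have hc : ∫ ω, π 0 ω ∂μ = c := by simp [h0]
  have hc0 : 0 ≤ c := hc ▸ integral_nonneg fun ω => (h.mem_Icc 0 ω).1
  have hV0 : variance (π 0) μ = 0 := by
    rw [h0, variance_eq_integral aemeasurable_const]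
    simp
  calc variance (π t) μ ≤ c * R * (1 / N 0 - 1 / N t) := by
        simpa only [hV0, hc, zero_add] using h.variance_share_le t
    _ ≤ c * R / N 0 := by
        have := h.size_pos t
        have := h.reward_nonneg
        rw [mul_sub, mul_one_div]
        linarith [show 0 ≤ c * R * (1 / N t) by positivity]

theorem memLp_limit [IsFiniteMeasure μ] (h : IsPolyaUrn μ 𝓕 π S R N) {πlim : Ω → ℝ}
    (hlim : ∀ᵐ ω ∂μ, Tendsto (π · ω) atTop (𝓝 (πlim ω))) (p : ENNReal) : MemLp πlim p μ :=
  memLp_of_tendsto_ae_of_mem_Icc (fun t => (h.stronglyMeasurable_share t).aestronglyMeasurable)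
    h.mem_Icc hlim p

theorem integral_limit [IsFiniteMeasure μ] (h : IsPolyaUrn μ 𝓕 π S R N) {πlim : Ω → ℝ}
    (hlim : ∀ᵐ ω ∂μ, Tendsto (π · ω) atTop (𝓝 (πlim ω))) :
    ∫ ω, πlim ω ∂μ = ∫ ω, π 0 ω ∂μ :=
  tendsto_nhds_unique
    (tendsto_integral_of_tendsto_ae_of_norm_le
      (fun t => (h.stronglyMeasurable_share t).aestronglyMeasurable) h.norm_share_le_one hlim)
    (by simp only [h.integral_share, tendsto_const_nhds])

theorem variance_limit_le_of_eq_const [IsProbabilityMeasure μ] (h : IsPolyaUrn μ 𝓕 π S R N)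
    {πlim : Ω → ℝ} (hlim : ∀ᵐ ω ∂μ, Tendsto (π · ω) atTop (𝓝 (πlim ω))) {c : ℝ}
    (h0 : π 0 = fun _ => c) : variance πlim μ ≤ c * R / N 0 :=
  le_of_tendsto'
    (tendsto_variance_of_tendsto_ae_of_mem_Icc
      (fun t => (h.stronglyMeasurable_share t).aestronglyMeasurable) h.mem_Icc hlim)
    (h.variance_share_le_of_eq_const h0)

end IsPolyaUrn

end PolyaUrn

theorem pos_share_concentration_large_investor_constant_reward_general
    {Ω : ℕ → Type*} {m0 : ∀ ν, MeasurableSpace (Ω ν)}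
    (μ : ∀ ν, Measure (Ω ν)) [∀ ν, IsProbabilityMeasure (μ ν)]
    (𝓕 : ∀ ν, Filtration ℕ (m0 ν))
    (π : ∀ ν, ℕ → Ω ν → ℝ) (πlim : ∀ ν, Ω ν → ℝ) (S : ∀ ν, ℕ → Set (Ω ν))
    (R : ℝ) (Nval f : ℕ → ℝ) (Nt : ℕ → ℕ → ℝ)
    (hR : 0 < R)
    (hf : Tendsto f atTop atTop)
    (hfN : ∀ ν, 0 < f ν ∧ f ν ≤ Nval ν)
    (hN0 : ∀ ν, Nt ν 0 = Nval ν)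
    (hNt : ∀ ν t, Nt ν (t + 1) = Nt ν t + R)
    (hadapted : ∀ ν, Adapted (𝓕 ν) (π ν))
    (hmem : ∀ ν t ω, π ν t ω ∈ Set.Icc (0 : ℝ) 1)
    (hSmeas : ∀ ν t, MeasurableSet[𝓕 ν (t + 1)] (S ν (t + 1)))
    (hcond : ∀ ν t,
      (μ ν)[(S ν (t + 1)).indicator (fun _ => (1 : ℝ)) | 𝓕 ν t] =ᵐ[μ ν] π ν t)
    (hrec : ∀ ν t, π ν (t + 1) = fun ω =>
      (Nt ν t / Nt ν (t + 1)) * π ν t ω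
        + (R / Nt ν (t + 1)) * (S ν (t + 1)).indicator 1 ω)
    (hπ0 : ∀ ν, π ν 0 = fun _ => f ν / Nval ν)
    (hlim : ∀ ν, ∀ᵐ ω ∂(μ ν), Tendsto (fun t => π ν t ω) atTop (nhds (πlim ν ω))) :
    ∀ ε > (0 : ℝ),
      (∀ ν, (∀ t : ℕ, 1 ≤ t →
          (μ ν {ω | ε < |π ν t ω / (f ν / Nval ν) - 1|}).toReal
            ≤ 5 * R / (4 * ε ^ 2 * f ν)) ∧
        (μ ν {ω | ε < |πlim ν ω / (f ν / Nval ν) - 1|}).toReal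
            ≤ 5 * R / (4 * ε ^ 2 * f ν)) ∧
      Tendsto (fun ν => 5 * R / (4 * ε ^ 2 * f ν)) atTop (nhds 0) := by
  intro ε hε
  refine ⟨fun ν => ?_, tendsto_const_nhds.div_atTop (hf.const_mul_atTop (by positivity))⟩
  obtain ⟨hf0, hfN⟩ := hfN ν
  have hN : 0 < Nval ν := hf0.trans_le hfN
  have hurn : IsPolyaUrn (μ ν) (𝓕 ν) (π ν) (S ν) R (Nt ν) :=
    ⟨hR.le, hN0 ν ▸ hN, hNt ν, hadapted ν, hmem ν, hSmeas ν, hcond ν, hrec ν⟩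
  have hc : 0 < f ν / Nval ν := by positivity
  have hmean : ∫ ω, π ν 0 ω ∂(μ ν) = f ν / Nval ν := by simp [hπ0]
  have hbound : f ν / Nval ν * R / Nt ν 0 / (ε * (f ν / Nval ν)) ^ 2
      ≤ 5 * R / (4 * ε ^ 2 * f ν) := calc
    _ = R / (ε ^ 2 * f ν) := by rw [hN0]; field_simp
    _ ≤ 5 * R / (4 * ε ^ 2 * f ν) := by
      rw [div_le_div_iff₀ (by positivity) (by positivity)]
      nlinarith [mul_pos (mul_pos hR (pow_pos hε 2)) hf0]
  refine ⟨fun t _ => ?_, ?_⟩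
  · exact (measureReal_lt_abs_div_sub_one_le (hurn.memLp_share t 2)
      (hurn.integral_share t ▸ hmean) (hurn.variance_share_le_of_eq_const (hπ0 ν) t) hc hε).trans
      hbound
  · exact (measureReal_lt_abs_div_sub_one_le (hurn.memLp_limit (hlim ν) 2)
      (hurn.integral_limit (hlim ν) ▸ hmean)
      (hurn.variance_limit_le_of_eq_const (hlim ν) (hπ0 ν)) hc hε).trans hbound

/-- For the Pólya urn with constant reward `R > 0`, if the initial endowment
`n_{k,0} = f(N)` satisfies `f(N) → ∞` as `N → ∞`, then for each `ε > 0` and each time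
`t ≥ 1` (or `t = ∞`), `P(|π_{k,t}/π_{k,0} − 1| > ε) ≤ 5R/(4 ε² f(N))`, a bound which
tends to `0` as `N → ∞`.  The family of urn models is indexed by `ν`, the model of
index `ν` having total initial coins `Nval ν → ∞` and investor `k` initially owning
`f ν` coins.  `πlim` denotes the almost sure limit of the share martingale. -/
theorem pos_share_concentration_large_investor_constant_reward
    {Ω : ℕ → Type*} {m0 : ∀ ν, MeasurableSpace (Ω ν)}
    (μ : ∀ ν, Measure (Ω ν)) [∀ ν, IsProbabilityMeasure (μ ν)]
    (𝓕 : ∀ ν, Filtration ℕ (m0 ν))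
    (π : ∀ ν, ℕ → Ω ν → ℝ) (πlim : ∀ ν, Ω ν → ℝ) (S : ∀ ν, ℕ → Set (Ω ν))
    (R : ℝ) (Nval f : ℕ → ℝ) (Nt : ℕ → ℕ → ℝ)
    (hR : 0 < R)
    (hNval : Tendsto Nval atTop atTop)
    (hf : Tendsto f atTop atTop)
    (hfN : ∀ ν, 0 < f ν ∧ f ν ≤ Nval ν)
    (hN0 : ∀ ν, Nt ν 0 = Nval ν)
    (hNt : ∀ ν t, Nt ν (t + 1) = Nt ν t + R)
    (hadapted : ∀ ν, Adapted (𝓕 ν) (π ν))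
    (hmem : ∀ ν t ω, π ν t ω ∈ Set.Icc (0 : ℝ) 1)
    (hSmeas : ∀ ν t, MeasurableSet[𝓕 ν (t + 1)] (S ν (t + 1)))
    (hcond : ∀ ν t,
      (μ ν)[(S ν (t + 1)).indicator (fun _ => (1 : ℝ)) | 𝓕 ν t] =ᵐ[μ ν] π ν t)
    (hrec : ∀ ν t, π ν (t + 1) = fun ω =>
      (Nt ν t / Nt ν (t + 1)) * π ν t ω
        + (R / Nt ν (t + 1)) * (S ν (t + 1)).indicator 1 ω)
    (hπ0 : ∀ ν, π ν 0 = fun _ => f ν / Nval ν)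
    (hlim : ∀ ν, ∀ᵐ ω ∂(μ ν), Tendsto (fun t => π ν t ω) atTop (nhds (πlim ν ω))) :
    ∀ ε > (0 : ℝ),
      (∀ ν, (∀ t : ℕ, 1 ≤ t →
          (μ ν {ω | ε < |π ν t ω / (f ν / Nval ν) - 1|}).toReal
            ≤ 5 * R / (4 * ε ^ 2 * f ν)) ∧
        (μ ν {ω | ε < |πlim ν ω / (f ν / Nval ν) - 1|}).toReal
            ≤ 5 * R / (4 * ε ^ 2 * f ν)) ∧
      Tendsto (fun ν => 5 * R / (4 * ε ^ 2 * f ν)) atTop (nhds 0) :=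
  pos_share_concentration_large_investor_constant_reward_general μ 𝓕 π πlim S R Nval f Nt hR hf hfN
    hN0 hNt hadapted hmem hSmeas hcond hrec hπ0 hlim
end

section
/- Assume the rewards R_t are nonincreasing with limit R̲ > 0. Then the variance coefficients a_t defined by a_1 = (R_1/N_1)², a_{t+1} = a_t + (R_{t+1}/N_{t+1})²(1 − a_t), with N_t = N + Σ_{s≤t} R_s, satisfy for every t ≥ 1: ((N − R_1)·R̲²·t)/(N(N + R_1)(N + R_1(1+t))) ≤ a_t ≤ R_1/N. -/
/-!
Write `b_t = 1 - a_t`, so that `b_{t+1} = (1 - q_{t+1}²) b_t` with `q_t = R_t / N_t`. Since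
`N_t = N_{t-1} + R_t`, one has `1 - q_t² = N_{t-1} (N_t + R_t) / N_t²`, hence the quantity
`b_t N_t / (N_t + R_t)` equals `N / N_1` at `t = 1` and does not decrease, because
`N_{t+1} ≤ N_t + R_t` for nonincreasing rewards. This gives `b_t ≥ N / (N + R_1)`, which is the
upper bound. For the lower bound, each step adds `q_{t+1}² b_t ≥ (N - R_1) R̲² / (N (N + R_1 (1 + t))²)`
to `a_t`, and `1 / (N + R_1 s)² ≥ 1 / ((N + R_1 s)(N + R_1 (s + 1)))` telescopes.
-/

theorem one_sub_div_add_sq_mul_div_add_add {x r : ℝ} (hxr : x + r ≠ 0) (hxrr : x + r + r ≠ 0) :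
    (1 - (r / (x + r)) ^ 2) * ((x + r) / (x + r + r)) = x / (x + r) := by
  field_simp
  ring

theorem div_mul_add_div_sq_le_succ_div_mul {c d m : ℝ} (hc : 0 < c) (hd : 0 ≤ d) (hm : 0 ≤ m) :
    (m + 1) / ((c + d) * (c + d * (1 + (m + 1)))) ≤
      m / ((c + d) * (c + d * (1 + m))) + 1 / (c + d * (m + 1)) ^ 2 := by
  have hA : 0 < c + d * (m + 1) := by positivity
  have hB : 0 < c + d * (m + 2) := by positivity
  have htelescope : (m + 1) / ((c + d) * (c + d * (1 + (m + 1)))) =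
      m / ((c + d) * (c + d * (1 + m))) + 1 / ((c + d * (m + 1)) * (c + d * (m + 2))) := by
    field_simp
    ring
  have hsq : 1 / ((c + d * (m + 1)) * (c + d * (m + 2))) ≤ 1 / (c + d * (m + 1)) ^ 2 := by
    rw [sq]
    gcongr
    linarith
  linarith

section Recursion

variable {R Nt a : ℕ → ℝ}

theorem le_add_mul_of_le_of_succ_eq_add {M : ℝ} (hRle : ∀ t, 1 ≤ t → R t ≤ M)
    (hNt : ∀ t, Nt (t + 1) = Nt t + R (t + 1)) (t : ℕ) : Nt t ≤ Nt 0 + M * t := by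
  induction t with
  | zero => simp
  | succ n ih =>
    rw [hNt, Nat.cast_succ]
    linarith [hRle (n + 1) n.succ_pos]

theorem monotone_of_succ_eq_add (hRpos : ∀ t, 1 ≤ t → 0 < R t)
    (hNt : ∀ t, Nt (t + 1) = Nt t + R (t + 1)) : Monotone Nt :=
  monotone_nat_of_le_succ fun n => by linarith [hNt n, hRpos (n + 1) n.succ_pos]

theorem div_le_one_sub_mul_div (hRpos : ∀ t, 1 ≤ t → 0 < R t)
    (hRdec : ∀ t, 1 ≤ t → R (t + 1) ≤ R t) (hN0 : 0 < Nt 0)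
    (hNt : ∀ t, Nt (t + 1) = Nt t + R (t + 1)) (ha1 : a 1 = (R 1 / Nt 1) ^ 2)
    (harec : ∀ t, 1 ≤ t → a (t + 1) = a t + (R (t + 1) / Nt (t + 1)) ^ 2 * (1 - a t)) :
    ∀ t, 1 ≤ t → Nt 0 / Nt 1 ≤ (1 - a t) * (Nt t / (Nt t + R t)) := by
  have hNpos : ∀ t, 0 < Nt t := fun t =>
    hN0.trans_le (monotone_of_succ_eq_add hRpos hNt t.zero_le)
  intro t ht
  induction t, ht using Nat.le_induction with
  | base =>
    have hpos : 0 < Nt 0 + R 1 + R 1 := by linarith [hRpos 1 le_rfl]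
    rw [ha1, hNt 0, one_sub_div_add_sq_mul_div_add_add (hNt 0 ▸ (hNpos 1).ne') hpos.ne']
  | succ t ht ih =>
    have hb : 0 ≤ 1 - a t := by
      refine nonneg_of_mul_nonneg_left (ih.trans' (div_pos hN0 (hNpos 1)).le) ?_
      exact div_pos (hNpos t) (by linarith [hNpos t, hRpos t ht])
    have hstep : (1 - a (t + 1)) * (Nt (t + 1) / (Nt (t + 1) + R (t + 1))) =
        (1 - a t) * (Nt t / Nt (t + 1)) := by
      have hpos : 0 < Nt t + R (t + 1) + R (t + 1) := by
        linarith [hNpos t, hRpos (t + 1) t.succ_pos]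
      rw [harec t ht, hNt, ← one_sub_div_add_sq_mul_div_add_add (hNt t ▸ (hNpos _).ne') hpos.ne']
      ring
    rw [hstep]
    refine ih.trans (mul_le_mul_of_nonneg_left ?_ hb)
    rw [hNt]
    exact div_le_div_of_nonneg_left (hNpos t).le (hNpos (t + 1) |>.trans_eq (hNt t))
      (by linarith [hRdec t ht])

theorem div_le_one_sub (hRpos : ∀ t, 1 ≤ t → 0 < R t)
    (hRdec : ∀ t, 1 ≤ t → R (t + 1) ≤ R t) (hN0 : 0 < Nt 0)
    (hNt : ∀ t, Nt (t + 1) = Nt t + R (t + 1)) (ha1 : a 1 = (R 1 / Nt 1) ^ 2)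
    (harec : ∀ t, 1 ≤ t → a (t + 1) = a t + (R (t + 1) / Nt (t + 1)) ^ 2 * (1 - a t))
    (t : ℕ) (ht : 1 ≤ t) : Nt 0 / Nt 1 ≤ 1 - a t := by
  have hinv := div_le_one_sub_mul_div hRpos hRdec hN0 hNt ha1 harec t ht
  have hNt1 : 0 < Nt 1 := by linarith [hNt 0, hRpos 1 le_rfl]
  have hNtt : 0 < Nt t := hN0.trans_le (monotone_of_succ_eq_add hRpos hNt t.zero_le)
  have hratio : 0 < Nt t / (Nt t + R t) := div_pos hNtt (by linarith [hRpos t ht])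
  have hb : 0 < 1 - a t := pos_of_mul_pos_left ((div_pos hN0 hNt1).trans_le hinv) hratio.le
  refine hinv.trans (mul_le_of_le_one_right hb.le ?_)
  exact div_le_one_of_le₀ (by linarith [hRpos t ht]) (by linarith [hRpos t ht])

theorem mul_sq_mul_div_le {q : ℕ → ℝ} {β ρ c d : ℝ} (hβ0 : 0 ≤ β) (hβ1 : β ≤ 1) (hρ : 0 ≤ ρ)
    (hc : 0 < c) (hd : 0 ≤ d) (hβ : ∀ t, 1 ≤ t → β ≤ 1 - a t)
    (hq : ∀ t, 1 ≤ t → ρ / (c + d * t) ≤ q t) (ha1 : a 1 = q 1 ^ 2)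
    (harec : ∀ t, 1 ≤ t → a (t + 1) = a t + q (t + 1) ^ 2 * (1 - a t)) :
    ∀ t : ℕ, 1 ≤ t → β * ρ ^ 2 * (t / ((c + d) * (c + d * (1 + t)))) ≤ a t := by
  have hq_sq : ∀ t, 1 ≤ t → (ρ / (c + d * t)) ^ 2 ≤ q t ^ 2 := fun t ht =>
    pow_le_pow_left₀ (by positivity) (hq t ht) 2
  intro t ht
  induction t, ht using Nat.le_induction with
  | base =>
    rw [ha1]
    refine le_trans ?_ (hq_sq 1 le_rfl)
    rw [Nat.cast_one, mul_one, div_pow]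
    calc β * ρ ^ 2 * (1 / ((c + d) * (c + d * (1 + 1))))
        ≤ 1 * ρ ^ 2 * (1 / ((c + d) * (c + d))) := by
          gcongr
          linarith
      _ = ρ ^ 2 / (c + d) ^ 2 := by ring
  | succ t ht ih =>
    rw [harec t ht]
    calc β * ρ ^ 2 * (((t + 1 : ℕ) : ℝ) / ((c + d) * (c + d * (1 + ((t + 1 : ℕ) : ℝ)))))
        ≤ β * ρ ^ 2 * (t / ((c + d) * (c + d * (1 + t))) + 1 / (c + d * (t + 1)) ^ 2) := by
          push_cast
          gcongr
          exact div_mul_add_div_sq_le_succ_div_mul hc hd t.cast_nonneg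
      _ = β * ρ ^ 2 * (t / ((c + d) * (c + d * (1 + t)))) +
            (ρ / (c + d * ((t + 1 : ℕ) : ℝ))) ^ 2 * β := by
          rw [div_pow, div_eq_mul_one_div (ρ ^ 2)]
          push_cast
          ring
      _ ≤ a t + q (t + 1) ^ 2 * (1 - a t) :=
          add_le_add ih (mul_le_mul (hq_sq _ t.succ_pos) (hβ t ht) hβ0 (sq_nonneg _))

end Recursion

open Filter

theorem variance_coeff_bounds_decreasing_reward_general
    (R : ℕ → ℝ) (Rbar N : ℝ) (Nt a : ℕ → ℝ)
    (hRpos : ∀ t, 1 ≤ t → 0 < R t)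
    (hRdec : ∀ t, 1 ≤ t → R (t + 1) ≤ R t)
    (hRbar : 0 < Rbar)
    (hRbar_le : ∀ t, 1 ≤ t → Rbar ≤ R t)
    (hN : R 1 < N)
    (hN0 : Nt 0 = N)
    (hNt : ∀ t, Nt (t + 1) = Nt t + R (t + 1))
    (ha1 : a 1 = (R 1 / Nt 1) ^ 2)
    (harec : ∀ t, 1 ≤ t → a (t + 1) = a t + (R (t + 1) / Nt (t + 1)) ^ 2 * (1 - a t)) :
    ∀ t : ℕ, 1 ≤ t →
      (N - R 1) * Rbar ^ 2 * t / (N * (N + R 1) * (N + R 1 * (1 + t))) ≤ a t ∧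
      a t ≤ R 1 / N := by
  have hR1 : 0 < R 1 := hRpos 1 le_rfl
  have hNpos : 0 < N := hR1.trans hN
  have hNt1 : Nt 1 = N + R 1 := by rw [hNt 0, hN0]
  have hupper : ∀ t, 1 ≤ t → N / (N + R 1) ≤ 1 - a t := fun t ht => by
    simpa only [hN0, hNt1] using div_le_one_sub hRpos hRdec (hN0 ▸ hNpos) hNt ha1 harec t ht
  have hβ : (N - R 1) / N ≤ N / (N + R 1) := by
    rw [div_le_div_iff₀ hNpos (by linarith)]
    nlinarith
  have hRle : ∀ t, 1 ≤ t → R t ≤ R 1 := fun t ht =>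
    antitoneOn_nat_Ici_of_succ_le hRdec Set.self_mem_Ici ht ht
  have hq : ∀ t, 1 ≤ t → Rbar / (N + R 1 * t) ≤ R t / Nt t := fun t ht => by
    have hNle := le_add_mul_of_le_of_succ_eq_add hRle hNt t
    rw [hN0] at hNle
    exact div_le_div₀ (hRpos t ht).le (hRbar_le t ht)
      (hNpos.trans_le (hN0 ▸ monotone_of_succ_eq_add hRpos hNt t.zero_le)) hNle
  have hlower := mul_sq_mul_div_le (q := fun t => R t / Nt t)
    (div_nonneg (by linarith) hNpos.le) (div_le_one_of_le₀ (by linarith) hNpos.le) hRbar.le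
    hNpos hR1.le (fun t ht => hβ.trans (hupper t ht)) hq ha1 harec
  intro t ht
  refine ⟨(hlower t ht).trans_eq' (by field_simp), ?_⟩
  calc a t ≤ 1 - N / (N + R 1) := by linarith [hupper t ht]
    _ = R 1 / (N + R 1) := by
        field_simp
        ring
    _ ≤ R 1 / N := div_le_div_of_nonneg_left hR1.le hNpos (by linarith)

/-- For nonincreasing rewards `R_t` with limit `R̲ > 0`, the variance coefficients `a_t`
defined by `a_1 = (R_1/N_1)²`, `a_{t+1} = a_t + (R_{t+1}/N_{t+1})² (1 - a_t)` with
`N_t = N + Σ_{s ≤ t} R_s` satisfy, for every `t ≥ 1`,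
`(N − R_1) R̲² t / (N (N + R_1)(N + R_1(1+t))) ≤ a_t ≤ R_1/N`. -/
theorem variance_coeff_bounds_decreasing_reward
    (R : ℕ → ℝ) (Rbar N : ℝ) (Nt a : ℕ → ℝ)
    (hRpos : ∀ t, 1 ≤ t → 0 < R t)
    (hRdec : ∀ t, 1 ≤ t → R (t + 1) ≤ R t)
    (hRbar : 0 < Rbar)
    (hRbar_le : ∀ t, 1 ≤ t → Rbar ≤ R t)
    (hRlim : Tendsto R atTop (nhds Rbar))
    (hN : R 1 < N)
    (hN0 : Nt 0 = N)
    (hNt : ∀ t, Nt (t + 1) = Nt t + R (t + 1))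
    (ha1 : a 1 = (R 1 / Nt 1) ^ 2)
    (harec : ∀ t, 1 ≤ t → a (t + 1) = a t + (R (t + 1) / Nt (t + 1)) ^ 2 * (1 - a t)) :
    ∀ t : ℕ, 1 ≤ t →
      (N - R 1) * Rbar ^ 2 * t / (N * (N + R 1) * (N + R 1 * (1 + t))) ≤ a t ∧
      a t ≤ R 1 / N :=
  variance_coeff_bounds_decreasing_reward_general R Rbar N Nt a hRpos hRdec hRbar hRbar_le hN hN0
    hNt ha1 harec
end

section
/- Assume R_t = Θ(t^{−α}) with 0 < α < 1/2 and R_t nonincreasing. Then there exist constants C > c > 0, independent of t and N, such that c·N^{−1/(1−α)} ≤ a_t ≤ C·N^{−1/(1−α)} for all t ≥ N^{1/(1−α)}, where a_t is the variance coefficient defined by a_1 = (R_1/N_1)², a_{t+1} = a_t + (R_{t+1}/N_{t+1})²(1−a_t) and N_t = N + Σ_{s≤t} R_s. -/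
/-!
With `q s = (R s / Nt N s) ^ 2` the recursion reads `1 - a (t + 1) = (1 - a t) (1 - q (t + 1))`, so
`1 - a t = ∏_{s ≤ t} (1 - q s)` and hence `S / (1 + S) ≤ a t ≤ S` for `S = ∑_{s ≤ t} q s`.
The bounds on `R` make `q s` comparable, uniformly in `N` and `s`, to
`(s ^ (-α) / (N + s ^ (1 - α))) ^ 2 = (N s ^ α + s) ^ (-2)`. Put `N = T ^ (1 - α)`. For `s ≤ T`
the terms are of order `T ^ (-2)`, and the `≈ T` of them give `≈ 1 / T`; they are also at most
`s ^ (-2 α) / N ^ 2`, whose sum up to `T` is `≲ T ^ (1 - 2 α) / N ^ 2 = 1 / T` because `α < 1 / 2`.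
The terms with `s > T` are at most `1 / s ^ 2` and contribute `≲ 1 / T`.
-/

open Real Finset

lemma rpow_neg_div_rpow_one_sub {x : ℝ} (hx : 0 < x) (α : ℝ) : x ^ (-α) / x ^ (1 - α) = x⁻¹ := by
  rw [← rpow_sub hx, show -α - (1 - α) = -1 by ring, rpow_neg_one]

lemma rpow_one_sub_two_mul_div_sq {x : ℝ} (hx : 0 < x) (α : ℝ) :
    x ^ (1 - 2 * α) / (x ^ (1 - α)) ^ 2 = x⁻¹ := by
  rw [← rpow_mul_natCast hx.le, ← rpow_sub hx, ← rpow_neg_one]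
  congr 1
  push_cast
  ring

lemma rpow_one_sub_le_sum_Ioc_rpow_neg {β : ℝ} (hβ : 0 ≤ β) {m : ℕ} (hm : 1 ≤ m) :
    (m : ℝ) ^ (1 - β) ≤ ∑ s ∈ Ioc 0 m, (s : ℝ) ^ (-β) := by
  have hm0 : (0 : ℝ) < m := by exact_mod_cast hm
  calc (m : ℝ) ^ (1 - β) = #(Ioc 0 m) • (m : ℝ) ^ (-β) := by
        rw [Nat.card_Ioc, Nat.sub_zero, nsmul_eq_mul, sub_eq_add_neg, rpow_add hm0, rpow_one]
    _ ≤ ∑ s ∈ Ioc 0 m, (s : ℝ) ^ (-β) := card_nsmul_le_sum _ _ _ fun s hs => by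
        obtain ⟨hs0, hsm⟩ := mem_Ioc.mp hs
        exact rpow_le_rpow_of_nonpos (by exact_mod_cast hs0) (by exact_mod_cast hsm) (by linarith)

lemma one_sub_mul_rpow_neg_le_rpow_sub_rpow {β x : ℝ} (hβ0 : 0 ≤ β) (hβ1 : β ≤ 1) (hx : 1 ≤ x) :
    (1 - β) * x ^ (-β) ≤ x ^ (1 - β) - (x - 1) ^ (1 - β) := by
  have hx0 : 0 < x := by linarith
  have hbernoulli := rpow_one_add_le_one_add_mul_self (s := -x⁻¹)
    (by linarith [inv_le_one_of_one_le₀ hx]) (by linarith : 0 ≤ 1 - β) (by linarith)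
  have hfactor : (x - 1) ^ (1 - β) = x ^ (1 - β) * (1 + -x⁻¹) ^ (1 - β) := by
    rw [← mul_rpow hx0.le (by linarith [inv_le_one_of_one_le₀ hx])]
    congr 1
    field_simp
    ring
  have hx_inv : x ^ (1 - β) * x⁻¹ = x ^ (-β) := by
    rw [← rpow_neg_one, ← rpow_add hx0]
    ring_nf
  calc (1 - β) * x ^ (-β) = x ^ (1 - β) - x ^ (1 - β) * (1 + (1 - β) * -x⁻¹) := by
        rw [← hx_inv]; ring
    _ ≤ x ^ (1 - β) - (x - 1) ^ (1 - β) := by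
        rw [hfactor]; gcongr

lemma sum_Ioc_rpow_neg_le {β : ℝ} (hβ0 : 0 ≤ β) (hβ1 : β < 1) (m : ℕ) :
    ∑ s ∈ Ioc 0 m, (s : ℝ) ^ (-β) ≤ (m : ℝ) ^ (1 - β) / (1 - β) := by
  rw [le_div_iff₀' (by linarith), mul_sum]
  induction m with
  | zero => simpa using rpow_nonneg le_rfl (1 - β)
  | succ m ih =>
    have hstep := one_sub_mul_rpow_neg_le_rpow_sub_rpow hβ0 hβ1.le (x := m + 1) (by simp)
    rw [add_sub_cancel_right] at hstep
    rw [sum_Ioc_succ_top m.zero_le]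
    push_cast
    linarith

lemma eq_add_sum_Ioc_of_succ {M : Type*} [AddCommMonoid M] {f g : ℕ → M}
    (h : ∀ t, f (t + 1) = f t + g (t + 1)) (t : ℕ) : f t = f 0 + ∑ s ∈ Ioc 0 t, g s := by
  induction t with
  | zero => simp
  | succ t ih => rw [h, ih, sum_Ioc_succ_top t.zero_le, add_assoc]

lemma one_sub_eq_prod_Ioc_of_rec {A : Type*} [CommRing A] {q a : ℕ → A} (ha1 : a 1 = q 1)
    (harec : ∀ t, 1 ≤ t → a (t + 1) = a t + q (t + 1) * (1 - a t)) {t : ℕ} (ht : 1 ≤ t) :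
    1 - a t = ∏ s ∈ Ioc 0 t, (1 - q s) := by
  induction t, ht using Nat.le_induction with
  | base => simp [ha1]
  | succ t ht ih => rw [prod_Ioc_succ_top (by omega), ← ih, harec t ht]; ring

lemma one_sub_prod_one_sub_le_sum {ι A : Type*} [LinearOrder ι] [CommRing A] [PartialOrder A]
    [IsOrderedRing A] (s : Finset ι) {q : ι → A} (hq0 : ∀ i ∈ s, 0 ≤ q i)
    (hq1 : ∀ i ∈ s, q i ≤ 1) : 1 - ∏ i ∈ s, (1 - q i) ≤ ∑ i ∈ s, q i := by
  rw [prod_one_sub_ordered, sub_sub_cancel]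
  refine sum_le_sum fun i hi => mul_le_of_le_one_right (hq0 i hi) (prod_le_one ?_ ?_)
  · intro j hj
    exact sub_nonneg.2 (hq1 j (mem_filter.1 hj).1)
  · intro j hj
    exact sub_le_self _ (hq0 j (mem_filter.1 hj).1)

lemma prod_one_sub_le_inv_one_add_sum {ι : Type*} (s : Finset ι) {q : ι → ℝ}
    (hq0 : ∀ i ∈ s, 0 ≤ q i) (hq1 : ∀ i ∈ s, q i ≤ 1) :
    ∏ i ∈ s, (1 - q i) ≤ (1 + ∑ i ∈ s, q i)⁻¹ := by
  have hS : 0 ≤ ∑ i ∈ s, q i := sum_nonneg hq0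
  calc ∏ i ∈ s, (1 - q i) ≤ ∏ i ∈ s, exp (-q i) :=
        prod_le_prod (fun i hi => sub_nonneg.2 (hq1 i hi)) fun i _ => one_sub_le_exp_neg _
    _ = (exp (∑ i ∈ s, q i))⁻¹ := by rw [← exp_sum, sum_neg_distrib, exp_neg]
    _ ≤ (1 + ∑ i ∈ s, q i)⁻¹ :=
        inv_anti₀ (by positivity) (by linarith [add_one_le_exp (∑ i ∈ s, q i)])

lemma sum_div_one_add_sum_le_and_le_sum_of_rec {q a : ℕ → ℝ}
    (hq : ∀ s, 1 ≤ s → 0 ≤ q s ∧ q s ≤ 1) (ha1 : a 1 = q 1)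
    (harec : ∀ t, 1 ≤ t → a (t + 1) = a t + q (t + 1) * (1 - a t)) {t : ℕ} (ht : 1 ≤ t) :
    (∑ s ∈ Ioc 0 t, q s) / (1 + ∑ s ∈ Ioc 0 t, q s) ≤ a t ∧ a t ≤ ∑ s ∈ Ioc 0 t, q s := by
  have hprod := one_sub_eq_prod_Ioc_of_rec ha1 harec ht
  have hq0 : ∀ s ∈ Ioc 0 t, 0 ≤ q s := fun s hs => (hq s (mem_Ioc.1 hs).1).1
  have hq1 : ∀ s ∈ Ioc 0 t, q s ≤ 1 := fun s hs => (hq s (mem_Ioc.1 hs).1).2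
  have hS : 0 ≤ ∑ s ∈ Ioc 0 t, q s := sum_nonneg hq0
  constructor
  · have hdiv : (∑ s ∈ Ioc 0 t, q s) / (1 + ∑ s ∈ Ioc 0 t, q s)
        = 1 - (1 + ∑ s ∈ Ioc 0 t, q s)⁻¹ := by field_simp; ring
    linarith [prod_one_sub_le_inv_one_add_sum _ hq0 hq1]
  · linarith [one_sub_prod_one_sub_le_sum _ hq0 hq1]

lemma mul_inv_le_div_one_add {c S T : ℝ} (hc : 0 ≤ c) (hT : 1 ≤ T) (hS : c * T⁻¹ ≤ S) :
    c / (1 + c) * T⁻¹ ≤ S / (1 + S) := by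
  have hT' : T⁻¹ ≤ 1 := inv_le_one_of_one_le₀ hT
  have hS0 : 0 ≤ S := (by positivity : 0 ≤ c * T⁻¹).trans hS
  rw [div_mul_eq_mul_div, div_le_div_iff₀ (by positivity) (by positivity)]
  nlinarith [mul_le_mul_of_nonneg_left hT' (mul_nonneg hc hS0)]

section Weight

variable {α N : ℝ}

lemma sum_Ioc_sq_rpow_div_le_two_div (hN : 0 ≤ N) (m t : ℕ) :
    ∑ s ∈ Ioc m t, ((s : ℝ) ^ (-α) / (N + (s : ℝ) ^ (1 - α))) ^ 2 ≤ 2 / (m + 1) := by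
  calc ∑ s ∈ Ioc m t, ((s : ℝ) ^ (-α) / (N + (s : ℝ) ^ (1 - α))) ^ 2
      ≤ ∑ s ∈ Ioo m (t + 1), ((s : ℝ) ^ 2)⁻¹ := by
        rw [Ioo_add_one_right_eq_Ioc]
        refine sum_le_sum fun s hs => ?_
        have hs0 : (0 : ℝ) < s := by exact_mod_cast (m.zero_le.trans_lt (mem_Ioc.1 hs).1)
        rw [← inv_pow, ← rpow_neg_div_rpow_one_sub hs0 α]
        gcongr
        linarith
    _ ≤ 2 / (m + 1) := sum_Ioo_inv_sq_le m (t + 1)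

lemma sum_Ioc_zero_sq_rpow_div_le (hα0 : 0 ≤ α) (hα : α < 1 / 2) (hN : 0 < N) (m : ℕ) :
    ∑ s ∈ Ioc 0 m, ((s : ℝ) ^ (-α) / (N + (s : ℝ) ^ (1 - α))) ^ 2
      ≤ (m : ℝ) ^ (1 - 2 * α) / (1 - 2 * α) / N ^ 2 :=
  calc ∑ s ∈ Ioc 0 m, ((s : ℝ) ^ (-α) / (N + (s : ℝ) ^ (1 - α))) ^ 2
      ≤ ∑ s ∈ Ioc 0 m, (s : ℝ) ^ (-(2 * α)) / N ^ 2 := by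
        refine sum_le_sum fun s _ => ?_
        rw [show -(2 * α) = -α * (2 : ℕ) by push_cast; ring, rpow_mul_natCast (Nat.cast_nonneg s),
          ← div_pow]
        gcongr
        exact le_add_of_nonneg_right (rpow_nonneg (Nat.cast_nonneg s) _)
    _ ≤ (m : ℝ) ^ (1 - 2 * α) / (1 - 2 * α) / N ^ 2 := by
        rw [← sum_div]
        gcongr
        exact sum_Ioc_rpow_neg_le (by linarith) (by linarith) m

lemma sum_Ioc_sq_rpow_div_le_inv (hα0 : 0 ≤ α) (hα : α < 1 / 2) {T : ℝ} (hT : 1 ≤ T) {t : ℕ}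
    (ht : T ≤ t) :
    ∑ s ∈ Ioc 0 t, ((s : ℝ) ^ (-α) / (T ^ (1 - α) + (s : ℝ) ^ (1 - α))) ^ 2
      ≤ (1 / (1 - 2 * α) + 2) * T⁻¹ := by
  have hT0 : 0 < T := by linarith
  set m := ⌊T⌋₊
  have hmt : m ≤ t := Nat.floor_le_of_le ht
  have hmT : (m : ℝ) ≤ T := Nat.floor_le hT0.le
  have hTm : T < m + 1 := Nat.lt_floor_add_one T
  rw [← sum_Ioc_consecutive _ m.zero_le hmt]
  have hhead := sum_Ioc_zero_sq_rpow_div_le hα0 hα (rpow_pos_of_pos hT0 (1 - α)) m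
  have hhead' : (m : ℝ) ^ (1 - 2 * α) / (1 - 2 * α) / (T ^ (1 - α)) ^ 2
      ≤ 1 / (1 - 2 * α) * T⁻¹ := by
    rw [← rpow_one_sub_two_mul_div_sq hT0 α, one_div_mul_eq_div, div_right_comm]
    gcongr <;> linarith
  have htail := sum_Ioc_sq_rpow_div_le_two_div (rpow_nonneg hT0.le (1 - α)) (α := α) m t
  have htail' : 2 / ((m : ℝ) + 1) ≤ 2 * T⁻¹ := by
    rw [div_eq_mul_inv]; gcongr
  linarith

lemma inv_le_sum_Ioc_sq_rpow_div (hα0 : 0 ≤ α) (hα1 : α ≤ 1) {T : ℝ} (hT : 1 ≤ T) {t : ℕ}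
    (ht : T ≤ t) :
    8⁻¹ * T⁻¹ ≤ ∑ s ∈ Ioc 0 t, ((s : ℝ) ^ (-α) / (T ^ (1 - α) + (s : ℝ) ^ (1 - α))) ^ 2 := by
  have hT0 : 0 < T := by linarith
  set m := ⌊T⌋₊
  have hmt : m ≤ t := Nat.floor_le_of_le ht
  have hmT : (m : ℝ) ≤ T := Nat.floor_le hT0.le
  have hm1 : 1 ≤ m := Nat.le_floor (by exact_mod_cast hT)
  have hTm : T ≤ 2 * m := by
    have : (1 : ℝ) ≤ m := by exact_mod_cast hm1
    linarith [Nat.lt_floor_add_one T]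
  have hterm : ∀ s ∈ Ioc 0 m,
      (2 * T)⁻¹ ≤ (s : ℝ) ^ (-α) / (T ^ (1 - α) + (s : ℝ) ^ (1 - α)) := by
    intro s hs
    obtain ⟨hs0, hsm⟩ := mem_Ioc.1 hs
    have hs0' : (0 : ℝ) < s := by exact_mod_cast hs0
    have hsT : (s : ℝ) ≤ T := (Nat.cast_le.2 hsm).trans hmT
    calc (2 * T)⁻¹ = T ^ (-α) / (T ^ (1 - α) + T ^ (1 - α)) := by
          rw [← two_mul, ← div_div, div_right_comm, rpow_neg_div_rpow_one_sub hT0]; ring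
      _ ≤ (s : ℝ) ^ (-α) / (T ^ (1 - α) + (s : ℝ) ^ (1 - α)) :=
          div_le_div₀ (rpow_nonneg hs0'.le _) (rpow_le_rpow_of_nonpos hs0' hsT (by linarith))
            (by positivity) (add_le_add_right (rpow_le_rpow hs0'.le hsT (by linarith)) _)
  calc 8⁻¹ * T⁻¹ = T / 2 * ((2 * T)⁻¹) ^ 2 := by field_simp; ring
    _ ≤ m * ((2 * T)⁻¹) ^ 2 := by gcongr; linarith
    _ = #(Ioc 0 m) • ((2 * T)⁻¹) ^ 2 := by simp
    _ ≤ ∑ s ∈ Ioc 0 m, ((s : ℝ) ^ (-α) / (T ^ (1 - α) + (s : ℝ) ^ (1 - α))) ^ 2 :=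
        card_nsmul_le_sum _ _ _ fun s hs => pow_le_pow_left₀ (by positivity) (hterm s hs) 2
    _ ≤ ∑ s ∈ Ioc 0 t, ((s : ℝ) ^ (-α) / (T ^ (1 - α) + (s : ℝ) ^ (1 - α))) ^ 2 :=
        sum_le_sum_of_subset_of_nonneg (Ioc_subset_Ioc_right hmt) fun _ _ _ => sq_nonneg _

end Weight

section Supply

variable {R : ℕ → ℝ} {α cR CR N : ℝ}

lemma nonneg_of_mul_rpow_neg_le (hcR : 0 ≤ cR)
    (hlow : ∀ s : ℕ, 1 ≤ s → cR * (s : ℝ) ^ (-α) ≤ R s) {s : ℕ} (hs : 1 ≤ s) : 0 ≤ R s :=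
  (mul_nonneg hcR (rpow_nonneg (Nat.cast_nonneg s) _)).trans (hlow s hs)

lemma sq_div_add_sum_Ioc_le_one (hN : 0 ≤ N) (hR : ∀ u, 1 ≤ u → 0 ≤ R u) {s : ℕ} (hs : 1 ≤ s) :
    (R s / (N + ∑ u ∈ Ioc 0 s, R u)) ^ 2 ≤ 1 := by
  have hsum : R s ≤ ∑ u ∈ Ioc 0 s, R u :=
    single_le_sum (fun u hu => hR u (mem_Ioc.1 hu).1) (mem_Ioc.2 ⟨hs, le_rfl⟩)
  have hRs := hR s hs
  exact pow_le_one₀ (div_nonneg hRs (by linarith)) (div_le_one_of_le₀ (by linarith) (by linarith))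

lemma mul_rpow_one_sub_le_sum_Ioc (hα : 0 ≤ α) (hcR : 0 ≤ cR)
    (hlow : ∀ s : ℕ, 1 ≤ s → cR * (s : ℝ) ^ (-α) ≤ R s) {s : ℕ} (hs : 1 ≤ s) :
    cR * (s : ℝ) ^ (1 - α) ≤ ∑ u ∈ Ioc 0 s, R u :=
  calc cR * (s : ℝ) ^ (1 - α) ≤ cR * ∑ u ∈ Ioc 0 s, (u : ℝ) ^ (-α) :=
        mul_le_mul_of_nonneg_left (rpow_one_sub_le_sum_Ioc_rpow_neg hα hs) hcR
    _ ≤ ∑ u ∈ Ioc 0 s, R u := by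
        rw [mul_sum]; exact sum_le_sum fun u hu => hlow u (mem_Ioc.1 hu).1

lemma sum_Ioc_le_mul_rpow_one_sub (hα0 : 0 ≤ α) (hα1 : α < 1) (hCR : 0 ≤ CR)
    (hup : ∀ s : ℕ, 1 ≤ s → R s ≤ CR * (s : ℝ) ^ (-α)) (s : ℕ) :
    ∑ u ∈ Ioc 0 s, R u ≤ CR / (1 - α) * (s : ℝ) ^ (1 - α) :=
  calc ∑ u ∈ Ioc 0 s, R u ≤ CR * ∑ u ∈ Ioc 0 s, (u : ℝ) ^ (-α) := by
        rw [mul_sum]; exact sum_le_sum fun u hu => hup u (mem_Ioc.1 hu).1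
    _ ≤ CR * ((s : ℝ) ^ (1 - α) / (1 - α)) :=
        mul_le_mul_of_nonneg_left (sum_Ioc_rpow_neg_le hα0 hα1 s) hCR
    _ = CR / (1 - α) * (s : ℝ) ^ (1 - α) := by ring

lemma div_add_sum_Ioc_le (hα : 0 ≤ α) (hcR : 0 < cR) (hCR : 0 ≤ CR)
    (hlow : ∀ s : ℕ, 1 ≤ s → cR * (s : ℝ) ^ (-α) ≤ R s)
    (hup : ∀ s : ℕ, 1 ≤ s → R s ≤ CR * (s : ℝ) ^ (-α)) (hN : 0 ≤ N) {s : ℕ} (hs : 1 ≤ s) :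
    R s / (N + ∑ u ∈ Ioc 0 s, R u)
      ≤ CR / min 1 cR * ((s : ℝ) ^ (-α) / (N + (s : ℝ) ^ (1 - α))) := by
  have hs0 : (0 : ℝ) < s := by exact_mod_cast hs
  have hden : min 1 cR * (N + (s : ℝ) ^ (1 - α)) ≤ N + ∑ u ∈ Ioc 0 s, R u := by
    have hN' : min 1 cR * N ≤ N := mul_le_of_le_one_left hN (min_le_left _ _)
    have hs' : min 1 cR * (s : ℝ) ^ (1 - α) ≤ cR * (s : ℝ) ^ (1 - α) :=
      mul_le_mul_of_nonneg_right (min_le_right _ _) (rpow_nonneg hs0.le _)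
    linarith [mul_rpow_one_sub_le_sum_Ioc hα hcR.le hlow hs]
  calc R s / (N + ∑ u ∈ Ioc 0 s, R u)
      ≤ CR * (s : ℝ) ^ (-α) / (min 1 cR * (N + (s : ℝ) ^ (1 - α))) :=
        div_le_div₀ (by positivity) (hup s hs) (by positivity) hden
    _ = CR / min 1 cR * ((s : ℝ) ^ (-α) / (N + (s : ℝ) ^ (1 - α))) :=
        (div_mul_div_comm _ _ _ _).symm

lemma le_div_add_sum_Ioc (hα0 : 0 ≤ α) (hα1 : α < 1) (hcR : 0 < cR) (hCR : 0 ≤ CR)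
    (hlow : ∀ s : ℕ, 1 ≤ s → cR * (s : ℝ) ^ (-α) ≤ R s)
    (hup : ∀ s : ℕ, 1 ≤ s → R s ≤ CR * (s : ℝ) ^ (-α)) (hN : 0 ≤ N) {s : ℕ} (hs : 1 ≤ s) :
    cR / max 1 (CR / (1 - α)) * ((s : ℝ) ^ (-α) / (N + (s : ℝ) ^ (1 - α)))
      ≤ R s / (N + ∑ u ∈ Ioc 0 s, R u) := by
  have hs0 : (0 : ℝ) < s := by exact_mod_cast hs
  have hden : N + ∑ u ∈ Ioc 0 s, R u ≤ max 1 (CR / (1 - α)) * (N + (s : ℝ) ^ (1 - α)) := by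
    have hN' : N ≤ max 1 (CR / (1 - α)) * N := le_mul_of_one_le_left hN (le_max_left _ _)
    have hs' : CR / (1 - α) * (s : ℝ) ^ (1 - α) ≤ max 1 (CR / (1 - α)) * (s : ℝ) ^ (1 - α) :=
      mul_le_mul_of_nonneg_right (le_max_right _ _) (rpow_nonneg hs0.le _)
    linarith [sum_Ioc_le_mul_rpow_one_sub hα0 hα1 hCR hup s]
  have hsupply : 0 < N + ∑ u ∈ Ioc 0 s, R u := by
    linarith [mul_rpow_one_sub_le_sum_Ioc hα0 hcR.le hlow hs,
      mul_pos hcR (rpow_pos_of_pos hs0 (1 - α))]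
  calc cR / max 1 (CR / (1 - α)) * ((s : ℝ) ^ (-α) / (N + (s : ℝ) ^ (1 - α)))
      = cR * (s : ℝ) ^ (-α) / (max 1 (CR / (1 - α)) * (N + (s : ℝ) ^ (1 - α))) :=
        div_mul_div_comm _ _ _ _
    _ ≤ R s / (N + ∑ u ∈ Ioc 0 s, R u) :=
        div_le_div₀ (by linarith [hlow s hs, mul_pos hcR (rpow_pos_of_pos hs0 (-α))])
          (hlow s hs) hsupply hden

lemma sum_sq_div_add_sum_Ioc_le_inv (hα0 : 0 ≤ α) (hα : α < 1 / 2) (hcR : 0 < cR) (hCR : 0 ≤ CR)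
    (hlow : ∀ s : ℕ, 1 ≤ s → cR * (s : ℝ) ^ (-α) ≤ R s)
    (hup : ∀ s : ℕ, 1 ≤ s → R s ≤ CR * (s : ℝ) ^ (-α)) {T : ℝ} (hT : 1 ≤ T) {t : ℕ}
    (ht : T ≤ t) :
    ∑ s ∈ Ioc 0 t, (R s / (T ^ (1 - α) + ∑ u ∈ Ioc 0 s, R u)) ^ 2
      ≤ (CR / min 1 cR) ^ 2 * (1 / (1 - 2 * α) + 2) * T⁻¹ := by
  have hN : 0 ≤ T ^ (1 - α) := rpow_nonneg (by linarith) _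
  calc ∑ s ∈ Ioc 0 t, (R s / (T ^ (1 - α) + ∑ u ∈ Ioc 0 s, R u)) ^ 2
      ≤ ∑ s ∈ Ioc 0 t,
          (CR / min 1 cR * ((s : ℝ) ^ (-α) / (T ^ (1 - α) + (s : ℝ) ^ (1 - α)))) ^ 2 := by
        refine sum_le_sum fun s hs => pow_le_pow_left₀ ?_
          (div_add_sum_Ioc_le hα0 hcR hCR hlow hup hN (mem_Ioc.1 hs).1) 2
        have hR : ∀ u, 1 ≤ u → 0 ≤ R u := fun u => nonneg_of_mul_rpow_neg_le hcR.le hlow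
        exact div_nonneg (hR s (mem_Ioc.1 hs).1)
          (add_nonneg hN (sum_nonneg fun u hu => hR u (mem_Ioc.1 hu).1))
    _ = (CR / min 1 cR) ^ 2 *
          ∑ s ∈ Ioc 0 t, ((s : ℝ) ^ (-α) / (T ^ (1 - α) + (s : ℝ) ^ (1 - α))) ^ 2 := by
        simp_rw [mul_pow, mul_sum]
    _ ≤ (CR / min 1 cR) ^ 2 * (1 / (1 - 2 * α) + 2) * T⁻¹ := by
        rw [mul_assoc]
        gcongr
        exact sum_Ioc_sq_rpow_div_le_inv hα0 hα hT ht

lemma inv_le_sum_sq_div_add_sum_Ioc (hα0 : 0 ≤ α) (hα1 : α < 1) (hcR : 0 < cR) (hCR : 0 ≤ CR)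
    (hlow : ∀ s : ℕ, 1 ≤ s → cR * (s : ℝ) ^ (-α) ≤ R s)
    (hup : ∀ s : ℕ, 1 ≤ s → R s ≤ CR * (s : ℝ) ^ (-α)) {T : ℝ} (hT : 1 ≤ T) {t : ℕ}
    (ht : T ≤ t) :
    (cR / max 1 (CR / (1 - α))) ^ 2 * 8⁻¹ * T⁻¹
      ≤ ∑ s ∈ Ioc 0 t, (R s / (T ^ (1 - α) + ∑ u ∈ Ioc 0 s, R u)) ^ 2 :=
  calc (cR / max 1 (CR / (1 - α))) ^ 2 * 8⁻¹ * T⁻¹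
      ≤ (cR / max 1 (CR / (1 - α))) ^ 2 *
          ∑ s ∈ Ioc 0 t, ((s : ℝ) ^ (-α) / (T ^ (1 - α) + (s : ℝ) ^ (1 - α))) ^ 2 := by
        rw [mul_assoc]
        gcongr
        exact inv_le_sum_Ioc_sq_rpow_div hα0 hα1.le hT ht
    _ = ∑ s ∈ Ioc 0 t, (cR / max 1 (CR / (1 - α)) *
          ((s : ℝ) ^ (-α) / (T ^ (1 - α) + (s : ℝ) ^ (1 - α)))) ^ 2 := by
        simp_rw [mul_pow, mul_sum]
    _ ≤ ∑ s ∈ Ioc 0 t, (R s / (T ^ (1 - α) + ∑ u ∈ Ioc 0 s, R u)) ^ 2 :=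
        sum_le_sum fun s hs => pow_le_pow_left₀ (by positivity)
          (le_div_add_sum_Ioc hα0 hα1 hcR hCR hlow hup (rpow_nonneg (by linarith) _)
            (mem_Ioc.1 hs).1) 2

end Supply

theorem variance_coeff_bounds_slow_decreasing_reward_general
    (R : ℕ → ℝ) (α cR CR : ℝ) (Nt : ℝ → ℕ → ℝ) (a : ℝ → ℕ → ℝ)
    (hα0 : 0 < α) (hα : α < 1 / 2) (hcR : 0 < cR)
    (hΘ : ∀ t : ℕ, 1 ≤ t → cR * (t : ℝ) ^ (-α) ≤ R t ∧ R t ≤ CR * (t : ℝ) ^ (-α))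
    (hN0 : ∀ N : ℝ, Nt N 0 = N)
    (hNt : ∀ N : ℝ, ∀ t, Nt N (t + 1) = Nt N t + R (t + 1))
    (ha1 : ∀ N : ℝ, a N 1 = (R 1 / Nt N 1) ^ 2)
    (harec : ∀ N : ℝ, ∀ t, 1 ≤ t →
      a N (t + 1) = a N t + (R (t + 1) / Nt N (t + 1)) ^ 2 * (1 - a N t)) :
    ∃ c C : ℝ, 0 < c ∧ c < C ∧
      ∀ N : ℝ, 1 ≤ N → ∀ t : ℕ, N ^ (1 / (1 - α)) ≤ (t : ℝ) →
        c * N ^ (-(1 / (1 - α))) ≤ a N t ∧ a N t ≤ C * N ^ (-(1 / (1 - α))) := by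
  have hlow : ∀ s : ℕ, 1 ≤ s → cR * (s : ℝ) ^ (-α) ≤ R s := fun s hs => (hΘ s hs).1
  have hup : ∀ s : ℕ, 1 ≤ s → R s ≤ CR * (s : ℝ) ^ (-α) := fun s hs => (hΘ s hs).2
  have hCR : 0 ≤ CR := by
    have h1 := (hlow 1 le_rfl).trans (hup 1 le_rfl)
    simp only [Nat.cast_one, one_rpow, mul_one] at h1
    linarith
  set c := (cR / max 1 (CR / (1 - α))) ^ 2 * 8⁻¹
  set C := (CR / min 1 cR) ^ 2 * (1 / (1 - 2 * α) + 2)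
  have hc : 0 < c := by positivity
  refine ⟨c / (1 + c), max C (c / (1 + c) + 1), by positivity,
    (lt_add_one _).trans_le (le_max_right _ _), fun N hN t ht => ?_⟩
  set T := N ^ (1 / (1 - α))
  have hT : 1 ≤ T := one_le_rpow hN (div_nonneg zero_le_one (by linarith))
  have hTN : T ^ (1 - α) = N := by
    rw [← rpow_mul (by linarith), one_div_mul_cancel (by linarith), rpow_one]
  have hsupply : ∀ s, Nt N s = T ^ (1 - α) + ∑ u ∈ Ioc 0 s, R u := fun s => by
    rw [eq_add_sum_Ioc_of_succ (hNt N) s, hN0, hTN]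
  have hq : ∀ s, 1 ≤ s → 0 ≤ (R s / Nt N s) ^ 2 ∧ (R s / Nt N s) ^ 2 ≤ 1 := fun s hs =>
    ⟨sq_nonneg _, hsupply s ▸ sq_div_add_sum_Ioc_le_one (rpow_nonneg (by linarith) _)
      (fun u => nonneg_of_mul_rpow_neg_le hcR.le hlow) hs⟩
  obtain ⟨hlower, hupper⟩ := sum_div_one_add_sum_le_and_le_sum_of_rec hq (ha1 N) (harec N)
    (Nat.one_le_cast.1 (hT.trans ht))
  simp only [hsupply] at hlower hupper
  rw [rpow_neg (by linarith)]
  exact ⟨(mul_inv_le_div_one_add hc.le hT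
      (inv_le_sum_sq_div_add_sum_Ioc hα0.le (by linarith) hcR hCR hlow hup hT ht)).trans hlower,
    hupper.trans ((sum_sq_div_add_sum_Ioc_le_inv hα0.le hα hcR hCR hlow hup hT ht).trans
      (by gcongr; exact le_max_left _ _))⟩

/-- For nonincreasing rewards `R_t = Θ(t^{−α})` with `0 < α < 1/2`, there exist constants
`C > c > 0` independent of `t` and of the initial supply `N` such that
`c N^{−1/(1−α)} ≤ a_t ≤ C N^{−1/(1−α)}` for all `t ≥ N^{1/(1−α)}`, where `a_t` is the
variance coefficient defined by `a_1 = (R_1/N_1)²`,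
`a_{t+1} = a_t + (R_{t+1}/N_{t+1})² (1−a_t)` and `N_t = N + Σ_{s ≤ t} R_s`. -/
theorem variance_coeff_bounds_slow_decreasing_reward
    (R : ℕ → ℝ) (α cR CR : ℝ) (Nt : ℝ → ℕ → ℝ) (a : ℝ → ℕ → ℝ)
    (hα0 : 0 < α) (hα : α < 1 / 2) (hcR : 0 < cR)
    (hΘ : ∀ t : ℕ, 1 ≤ t → cR * (t : ℝ) ^ (-α) ≤ R t ∧ R t ≤ CR * (t : ℝ) ^ (-α))
    (hRdec : ∀ t, 1 ≤ t → R (t + 1) ≤ R t)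
    (hN0 : ∀ N : ℝ, Nt N 0 = N)
    (hNt : ∀ N : ℝ, ∀ t, Nt N (t + 1) = Nt N t + R (t + 1))
    (ha1 : ∀ N : ℝ, a N 1 = (R 1 / Nt N 1) ^ 2)
    (harec : ∀ N : ℝ, ∀ t, 1 ≤ t →
      a N (t + 1) = a N t + (R (t + 1) / Nt N (t + 1)) ^ 2 * (1 - a N t)) :
    ∃ c C : ℝ, 0 < c ∧ c < C ∧
      ∀ N : ℝ, 1 ≤ N → ∀ t : ℕ, N ^ (1 / (1 - α)) ≤ (t : ℝ) →
        c * N ^ (-(1 / (1 - α))) ≤ a N t ∧ a N t ≤ C * N ^ (-(1 / (1 - α))) :=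
  variance_coeff_bounds_slow_decreasing_reward_general R α cR CR Nt a hα0 hα hcR hΘ hN0 hNt ha1
    harec
end

section
/- For the Pólya urn with geometric reward R_t = ρ·N_{t-1}^γ with ρ > 0 and γ > 1, the variance coefficients a_t increase to 1, and consequently the limiting share π_{k,∞} ∈ {0, 1} almost surely with P(π_{k,∞} = 1) = π_{k,0} and P(π_{k,∞} = 0) = 1 − π_{k,0}. -/
/-!
Writing `r_t = R_{t+1} / N_{t+1}`, the share moves as `π_{t+1} = π_t + r_t (1_{S_{t+1}} - π_t)`,
and the increment `1_{S_{t+1}} - π_t` is orthogonal to every bounded `𝓕_t`-measurable function.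
Hence `E π_t = p` and `E π_{t+1}² = E π_t² + r_t² (p - E π_t²)`, the same affine recursion that
`a_t` satisfies with target `1` (indeed `E π_t² = p² + a_t p (1 - p)`). Geometric reward makes
`N_t → ∞` and `r_t → 1`, so `a_t → 1` and `E π_t² → p`. By bounded convergence
`E π_∞ = E π_∞² = p`, so the nonnegative variable `π_∞ (1 - π_∞)` has mean zero, `π_∞ ∈ {0, 1}`
almost surely, and `P(π_∞ = 1) = E π_∞ = p`.
-/

open MeasureTheory Filter Set ProbabilityTheory Topology

theorem tendsto_of_succ_eq_add_mul_sub {x b : ℕ → ℝ} {c : ℝ} (hb : ∀ t, b t ∈ Icc (0 : ℝ) 1)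
    (hb1 : Tendsto b atTop (𝓝 1)) (hx : ∀ t, x (t + 1) = x t + b t * (c - x t)) :
    Tendsto x atTop (𝓝 c) := by
  set u := fun t => c - x t with hu_def
  have hu : ∀ t, u (t + 1) = (1 - b t) * u t := fun t => by simp only [hu_def, hx]; ring
  have hv : ∀ t, |1 - b t| ≤ 1 := fun t =>
    abs_le.2 ⟨by linarith [(hb t).2], by linarith [(hb t).1]⟩
  have hu_le : ∀ t, |u t| ≤ |u 0| := by
    intro t
    induction t with
    | zero => rfl
    | succ t ih =>
      rw [hu, abs_mul]
      exact (mul_le_of_le_one_left (abs_nonneg _) (hv t)).trans ih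
  have hbound : Tendsto (fun t => |1 - b t| * |u 0|) atTop (𝓝 0) := by
    simpa using (((tendsto_const_nhds (x := (1 : ℝ))).sub hb1).abs.mul_const |u 0|)
  have hu0 : Tendsto u atTop (𝓝 0) := by
    rw [← tendsto_add_atTop_iff_nat 1]
    refine squeeze_zero_norm (fun t => ?_) hbound
    rw [hu, Real.norm_eq_abs, abs_mul]
    exact mul_le_mul_of_nonneg_left (hu_le t) (abs_nonneg _)
  simpa [hu_def] using (tendsto_const_nhds (x := c)).sub hu0

section GeometricReward

variable {ρ γ : ℝ} {N : ℕ → ℝ}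

theorem urn_size_pos (hρ : 0 < ρ) (hN0 : 0 < N 0) (hN : ∀ t, N (t + 1) = N t + ρ * N t ^ γ)
    (t : ℕ) : 0 < N t := by
  induction t with
  | zero => exact hN0
  | succ t ih => rw [hN]; have := Real.rpow_pos_of_pos ih γ; positivity

theorem reward_div_urn_size_mem_Icc (hρ : 0 < ρ) (hN0 : 0 < N 0)
    (hN : ∀ t, N (t + 1) = N t + ρ * N t ^ γ) (t : ℕ) :
    ρ * N t ^ γ / N (t + 1) ∈ Icc (0 : ℝ) 1 := by
  have hpos := urn_size_pos hρ hN0 hN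
  have hreward : 0 ≤ ρ * N t ^ γ := mul_nonneg hρ.le (Real.rpow_nonneg (hpos t).le γ)
  refine ⟨div_nonneg hreward (hpos _).le, ?_⟩
  rw [div_le_one (hpos _), hN]
  linarith [hpos t]

theorem tendsto_urn_size_atTop (hρ : 0 < ρ) (hγ : 0 ≤ γ) (hN0 : 0 < N 0)
    (hN : ∀ t, N (t + 1) = N t + ρ * N t ^ γ) : Tendsto N atTop atTop := by
  have hlin : ∀ t : ℕ, N 0 + t * (ρ * N 0 ^ γ) ≤ N t := by
    intro t
    induction t with
    | zero => simp
    | succ t ih =>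
      have hgain : 0 ≤ (t : ℝ) * (ρ * N 0 ^ γ) := by positivity
      have hmono : N 0 ^ γ ≤ N t ^ γ := Real.rpow_le_rpow hN0.le (by linarith) hγ
      rw [hN]; push_cast; nlinarith
  refine tendsto_atTop_mono hlin (tendsto_atTop_add_const_left _ _ ?_)
  have hincr : 0 < ρ * N 0 ^ γ := mul_pos hρ (Real.rpow_pos_of_pos hN0 γ)
  exact tendsto_natCast_atTop_atTop.atTop_mul_const hincr

theorem tendsto_reward_div_urn_size (hρ : 0 < ρ) (hγ : 1 < γ) (hN0 : 0 < N 0)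
    (hN : ∀ t, N (t + 1) = N t + ρ * N t ^ γ) :
    Tendsto (fun t => ρ * N t ^ γ / N (t + 1)) atTop (𝓝 1) := by
  have hpos := urn_size_pos hρ hN0 hN
  have hshare : ∀ t, ρ * N t ^ γ / N (t + 1) = 1 - (1 + ρ * N t ^ (γ - 1))⁻¹ := by
    intro t
    have := hpos t
    rw [hN, Real.rpow_sub_one this.ne']
    field_simp
    ring
  have hgrow : Tendsto (fun t => 1 + ρ * N t ^ (γ - 1)) atTop atTop :=
    tendsto_atTop_add_const_left _ 1 <| Tendsto.const_mul_atTop hρ <|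
      (tendsto_rpow_atTop (by linarith)).comp (tendsto_urn_size_atTop hρ (by linarith) hN0 hN)
  simpa [hshare] using (tendsto_const_nhds (x := (1 : ℝ))).sub hgrow.inv_tendsto_atTop

end GeometricReward

section PullOut

variable {Ω : Type*} {m m0 : MeasurableSpace Ω} {μ : Measure Ω}

theorem integral_mul_sub_condExp_eq_zero (hm : m ≤ m0) [SigmaFinite (μ.trim hm)] {f g : Ω → ℝ}
    (hf : Integrable f μ) (hg : StronglyMeasurable[m] g) {C : ℝ} (hgC : ∀ᵐ ω ∂μ, ‖g ω‖ ≤ C) :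
    ∫ ω, g ω * (f ω - μ[f|m] ω) ∂μ = 0 := by
  have hg' : AEStronglyMeasurable g μ := (hg.mono hm).aestronglyMeasurable
  have hgf : Integrable (fun ω => g ω * f ω) μ := hf.bdd_mul hg' hgC
  have hgcf : Integrable (fun ω => g ω * μ[f|m] ω) μ := integrable_condExp.bdd_mul hg' hgC
  have hpull : ∫ ω, g ω * f ω ∂μ = ∫ ω, g ω * μ[f|m] ω ∂μ := by
    rw [← integral_condExp hm]
    exact integral_congr_ae (condExp_mul_of_stronglyMeasurable_left hg hgf hf)
  simp_rw [mul_sub]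
  rw [integral_sub hgf hgcf, hpull, sub_self]

end PullOut

section UrnStep

variable {Ω : Type*} {m m0 : MeasurableSpace Ω} {μ : Measure Ω} [IsFiniteMeasure μ]
  {X : Ω → ℝ} {S : Set Ω}

theorem integrable_of_ae_mem_Icc {f : Ω → ℝ} (hf : AEStronglyMeasurable f μ)
    (h01 : ∀ᵐ ω ∂μ, f ω ∈ Icc (0 : ℝ) 1) : Integrable f μ :=
  .of_bound hf 1 (h01.mono fun _ h => abs_le.2 ⟨by linarith [h.1], h.2⟩)

theorem integral_add_affine_mul_indicator_sub (hm : m ≤ m0) (hX : StronglyMeasurable[m] X)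
    (hX01 : ∀ ω, X ω ∈ Icc (0 : ℝ) 1) (hS : MeasurableSet S)
    (hcond : μ[S.indicator 1|m] =ᵐ[μ] X) {A : Ω → ℝ} (hA : Integrable A μ) (c d : ℝ) :
    ∫ ω, A ω + (c * X ω + d) * (S.indicator 1 ω - X ω) ∂μ = ∫ ω, A ω ∂μ := by
  have hXabs : ∀ ω, |X ω| ≤ 1 := fun ω => abs_le.2 ⟨by linarith [(hX01 ω).1], (hX01 ω).2⟩
  have hXint : Integrable X μ :=
    integrable_of_ae_mem_Icc (hX.mono hm).aestronglyMeasurable (.of_forall hX01)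
  have hbound : ∀ᵐ ω ∂μ, ‖c * X ω + d‖ ≤ |c| + |d| := by
    refine Eventually.of_forall fun ω => ?_
    calc ‖c * X ω + d‖ ≤ |c| * |X ω| + |d| := by rw [← abs_mul]; exact abs_add_le _ _
      _ ≤ |c| + |d| := by gcongr; exact mul_le_of_le_one_right (abs_nonneg c) (hXabs ω)
  have hgm : StronglyMeasurable[m] fun ω => c * X ω + d := (hX.const_mul c).add_const d
  have hzero : ∫ ω, (c * X ω + d) * (S.indicator 1 ω - X ω) ∂μ = 0 := by
    rw [← integral_mul_sub_condExp_eq_zero (f := S.indicator 1) hm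
      ((integrable_const 1).indicator hS) hgm hbound]
    exact integral_congr_ae (hcond.mono fun ω h => by simp only [h])
  have hint : Integrable (fun ω => (c * X ω + d) * (S.indicator 1 ω - X ω)) μ :=
    (((integrable_const 1).indicator hS).sub hXint).bdd_mul
      (hgm.mono hm).aestronglyMeasurable hbound
  rw [integral_add hA hint, hzero, add_zero]

theorem integral_urn_step (hm : m ≤ m0) (hX : StronglyMeasurable[m] X)
    (hX01 : ∀ ω, X ω ∈ Icc (0 : ℝ) 1) (hS : MeasurableSet S)
    (hcond : μ[S.indicator 1|m] =ᵐ[μ] X) (r : ℝ) :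
    ∫ ω, (1 - r) * X ω + r * S.indicator 1 ω ∂μ = ∫ ω, X ω ∂μ := by
  rw [← integral_add_affine_mul_indicator_sub hm hX hX01 hS hcond
    (integrable_of_ae_mem_Icc (hX.mono hm).aestronglyMeasurable (.of_forall hX01)) 0 r]
  congr with ω
  ring

theorem integral_sq_urn_step (hm : m ≤ m0) (hX : StronglyMeasurable[m] X)
    (hX01 : ∀ ω, X ω ∈ Icc (0 : ℝ) 1) (hS : MeasurableSet S)
    (hcond : μ[S.indicator 1|m] =ᵐ[μ] X) (r : ℝ) :
    ∫ ω, ((1 - r) * X ω + r * S.indicator 1 ω) ^ 2 ∂μ =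
      (1 - r ^ 2) * ∫ ω, X ω ^ 2 ∂μ + r ^ 2 * ∫ ω, X ω ∂μ := by
  have hXm : AEStronglyMeasurable X μ := (hX.mono hm).aestronglyMeasurable
  have hXint : Integrable X μ := integrable_of_ae_mem_Icc hXm (.of_forall hX01)
  have hX2int : Integrable (fun ω => X ω ^ 2) μ :=
    integrable_of_ae_mem_Icc (hXm.pow 2) (.of_forall fun ω =>
      ⟨by positivity, pow_le_one₀ (hX01 ω).1 (hX01 ω).2⟩)
  have hA : Integrable (fun ω => (1 - r ^ 2) * X ω ^ 2 + r ^ 2 * X ω) μ :=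
    (hX2int.const_mul _).add (hXint.const_mul _)
  -- `S.indicator 1` is idempotent, which makes the square affine in the indicator
  calc ∫ ω, ((1 - r) * X ω + r * S.indicator 1 ω) ^ 2 ∂μ
      = ∫ ω, ((1 - r ^ 2) * X ω ^ 2 + r ^ 2 * X ω)
          + (2 * r * (1 - r) * X ω + r ^ 2) * (S.indicator 1 ω - X ω) ∂μ := by
        congr with ω
        by_cases h : ω ∈ S <;>
          simp only [h, indicator_of_mem, indicator_of_notMem, not_false_eq_true, Pi.one_apply] <;>
          ring
    _ = (1 - r ^ 2) * ∫ ω, X ω ^ 2 ∂μ + r ^ 2 * ∫ ω, X ω ∂μ := by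
        rw [integral_add_affine_mul_indicator_sub hm hX hX01 hS hcond hA,
          integral_add (hX2int.const_mul _) (hXint.const_mul _), integral_const_mul,
          integral_const_mul]

end UrnStep

section ZeroOneLimit

variable {Ω : Type*} {m0 : MeasurableSpace Ω} {μ : Measure Ω}

theorem ae_eq_zero_or_one_of_integral_sq_eq [IsFiniteMeasure μ] {f : Ω → ℝ}
    (hf : AEStronglyMeasurable f μ)
    (h01 : ∀ᵐ ω ∂μ, f ω ∈ Icc (0 : ℝ) 1) (hsq : ∫ ω, f ω ^ 2 ∂μ = ∫ ω, f ω ∂μ) :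
    ∀ᵐ ω ∂μ, f ω = 0 ∨ f ω = 1 := by
  have hint := integrable_of_ae_mem_Icc hf h01
  have hint2 : Integrable (fun ω => f ω ^ 2) μ := integrable_of_ae_mem_Icc (hf.pow 2)
    (h01.mono fun ω h => ⟨by positivity, pow_le_one₀ h.1 h.2⟩)
  have hvar : ∫ ω, f ω - f ω ^ 2 ∂μ = 0 := by rw [integral_sub hint hint2, hsq, sub_self]
  have hnn : 0 ≤ᵐ[μ] fun ω => f ω - f ω ^ 2 :=
    h01.mono fun ω h => show 0 ≤ f ω - f ω ^ 2 by nlinarith [h.1, h.2]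
  filter_upwards [(integral_eq_zero_iff_of_nonneg_ae hnn (hint.sub hint2)).1 hvar] with ω hω
  rw [Pi.zero_apply] at hω
  have hprod : f ω * (1 - f ω) = 0 := by linear_combination hω
  rcases mul_eq_zero.1 hprod with h | h
  · exact .inl h
  · exact .inr (by linarith)

theorem measure_eq_one_eq_ofReal_integral [IsFiniteMeasure μ] {f : Ω → ℝ}
    (hf : AEStronglyMeasurable f μ)
    (h01 : ∀ᵐ ω ∂μ, f ω = 0 ∨ f ω = 1) :
    μ {ω | f ω = 1} = ENNReal.ofReal (∫ ω, f ω ∂μ) := by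
  have hs : NullMeasurableSet {ω | f ω = 1} μ :=
    hf.nullMeasurableSet_eq_fun aestronglyMeasurable_const
  have hind : f =ᵐ[μ] {ω | f ω = 1}.indicator fun _ => 1 :=
    h01.mono fun ω h => by rcases h with h | h <;> simp [h]
  rw [integral_congr_ae hind, integral_indicator₀ hs, setIntegral_const, smul_eq_mul, mul_one,
    ofReal_measureReal]

theorem ae_eq_zero_or_one_of_tendsto_integral_sq [IsProbabilityMeasure μ] {X : ℕ → Ω → ℝ}
    {Xlim : Ω → ℝ} {p : ℝ} (hX : ∀ t, AEStronglyMeasurable (X t) μ)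
    (hX01 : ∀ t ω, X t ω ∈ Icc (0 : ℝ) 1)
    (hlim : ∀ᵐ ω ∂μ, Tendsto (fun t => X t ω) atTop (𝓝 (Xlim ω)))
    (hmean : ∀ t, ∫ ω, X t ω ∂μ = p) (hsq : Tendsto (fun t => ∫ ω, X t ω ^ 2 ∂μ) atTop (𝓝 p)) :
    (∀ᵐ ω ∂μ, Xlim ω = 0 ∨ Xlim ω = 1) ∧
    μ {ω | Xlim ω = 1} = ENNReal.ofReal p ∧ μ {ω | Xlim ω = 0} = ENNReal.ofReal (1 - p) := by
  have hXlim : AEStronglyMeasurable Xlim μ := aestronglyMeasurable_of_tendsto_ae atTop hX hlim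
  have hXlim01 : ∀ᵐ ω ∂μ, Xlim ω ∈ Icc (0 : ℝ) 1 :=
    hlim.mono fun ω h => isClosed_Icc.mem_of_tendsto h (.of_forall fun t => hX01 t ω)
  have hbound : ∀ (k : ℕ), ∃ C, ∀ᶠ t in atTop, ∀ᵐ ω ∂μ, ‖X t ω ^ k‖ ≤ C := fun k =>
    ⟨1, .of_forall fun t => .of_forall fun ω => by
      rw [norm_pow]
      exact pow_le_one₀ (norm_nonneg _) (abs_le.2 ⟨by linarith [(hX01 t ω).1], (hX01 t ω).2⟩)⟩
  have hmean_lim : ∫ ω, Xlim ω ∂μ = p := by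
    refine tendsto_nhds_unique (tendsto_integral_filter_of_norm_le_const (.of_forall hX)
      (by simpa using hbound 1) hlim) ?_
    simp only [hmean, tendsto_const_nhds]
  have hsq_lim : ∫ ω, Xlim ω ^ 2 ∂μ = p :=
    tendsto_nhds_unique (tendsto_integral_filter_of_norm_le_const
      (.of_forall fun t => (hX t).pow 2) (hbound 2) (hlim.mono fun ω h => h.pow 2)) hsq
  have h01 := ae_eq_zero_or_one_of_integral_sq_eq hXlim hXlim01 (hsq_lim.trans hmean_lim.symm)
  refine ⟨h01, by rw [measure_eq_one_eq_ofReal_integral hXlim h01, hmean_lim], ?_⟩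
  -- `1 - Xlim` is again `{0, 1}`-valued, with mean `1 - p`
  have hcompl := measure_eq_one_eq_ofReal_integral (f := fun ω => 1 - Xlim ω)
    (aestronglyMeasurable_const.sub hXlim)
    (h01.mono fun ω h => h.symm.imp (fun h1 => by simp [h1]) (fun h0 => by simp [h0]))
  have hset : {ω | Xlim ω = 0} = {ω | 1 - Xlim ω = 1} := by ext ω; simp
  rw [hset, hcompl, integral_sub (integrable_const 1) (integrable_of_ae_mem_Icc hXlim hXlim01),
    hmean_lim, integral_const, probReal_univ, one_smul]

end ZeroOneLimit

theorem pos_share_chaotic_centralization_geometric_reward_general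
    {Ω : Type*} {m0 : MeasurableSpace Ω} (μ : Measure Ω) [IsProbabilityMeasure μ]
    (𝓕 : Filtration ℕ m0)
    (π : ℕ → Ω → ℝ) (πlim : Ω → ℝ) (S : ℕ → Set Ω)
    (ρ γ N p : ℝ) (R Nt a : ℕ → ℝ)
    (hρ : 0 < ρ) (hγ : 1 < γ) (hN : 0 < N)
    (hN0 : Nt 0 = N)
    (hR : ∀ t, R (t + 1) = ρ * Nt t ^ γ)
    (hNt : ∀ t, Nt (t + 1) = Nt t + R (t + 1))
    (hadapted : Adapted 𝓕 π)
    (hmem : ∀ t ω, π t ω ∈ Set.Icc (0 : ℝ) 1)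
    (hSmeas : ∀ t, MeasurableSet[𝓕 (t + 1)] (S (t + 1)))
    (hcond : ∀ t, μ[(S (t + 1)).indicator (fun _ => (1 : ℝ)) | 𝓕 t] =ᵐ[μ] π t)
    (hrec : ∀ t, π (t + 1) = fun ω =>
      (Nt t / Nt (t + 1)) * π t ω + (R (t + 1) / Nt (t + 1)) * (S (t + 1)).indicator 1 ω)
    (hπ0 : π 0 = fun _ => p)
    (harec : ∀ t, 1 ≤ t → a (t + 1) = a t + (R (t + 1) / Nt (t + 1)) ^ 2 * (1 - a t))
    (hlim : ∀ᵐ ω ∂μ, Tendsto (fun t => π t ω) atTop (nhds (πlim ω))) :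
    Tendsto a atTop (nhds 1) ∧
    (∀ᵐ ω ∂μ, πlim ω = 0 ∨ πlim ω = 1) ∧
    μ {ω | πlim ω = 1} = ENNReal.ofReal p ∧
    μ {ω | πlim ω = 0} = ENNReal.ofReal (1 - p) := by
  have hsize : ∀ t, Nt (t + 1) = Nt t + ρ * Nt t ^ γ := fun t => by rw [hNt, hR]
  have hsize0 : 0 < Nt 0 := hN0 ▸ hN
  have hpos := urn_size_pos hρ hsize0 hsize
  set r : ℕ → ℝ := fun t => R (t + 1) / Nt (t + 1)
  have hr : ∀ t, r t = ρ * Nt t ^ γ / Nt (t + 1) := fun t => by simp only [r, hR]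
  have hr_sq01 : ∀ t, r t ^ 2 ∈ Icc (0 : ℝ) 1 := fun t => by
    obtain ⟨h0, h1⟩ := reward_div_urn_size_mem_Icc hρ hsize0 hsize t
    rw [hr]
    exact ⟨sq_nonneg _, pow_le_one₀ h0 h1⟩
  have hr_sq1 : Tendsto (fun t => r t ^ 2) atTop (𝓝 1) := by
    simpa only [hr, one_pow] using (tendsto_reward_div_urn_size hρ hγ hsize0 hsize).pow 2
  have hstep : ∀ t,
      π (t + 1) = fun ω => (1 - r t) * π t ω + r t * (S (t + 1)).indicator 1 ω := by
    intro t
    have hcoef : Nt t / Nt (t + 1) = 1 - r t := by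
      rw [eq_sub_iff_add_eq, ← add_div, ← hNt, div_self (hpos _).ne']
    rw [hrec, hcoef]
  have hSm : ∀ t, MeasurableSet (S (t + 1)) := fun t => 𝓕.le _ _ (hSmeas t)
  have hπm : ∀ t, StronglyMeasurable[𝓕 t] (π t) := fun t => (hadapted t).stronglyMeasurable
  have hmean : ∀ t, ∫ ω, π t ω ∂μ = p := by
    intro t
    induction t with
    | zero => simp [hπ0]
    | succ t ih => rw [hstep, integral_urn_step (𝓕.le t) (hπm t) (hmem t) (hSm t) (hcond t), ih]
  have hsq : Tendsto (fun t => ∫ ω, π t ω ^ 2 ∂μ) atTop (𝓝 p) :=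
    tendsto_of_succ_eq_add_mul_sub hr_sq01 hr_sq1 fun t => by
      simp only [hstep]
      rw [integral_sq_urn_step (𝓕.le t) (hπm t) (hmem t) (hSm t) (hcond t), hmean]
      ring
  refine ⟨?_, ae_eq_zero_or_one_of_tendsto_integral_sq
    (fun t => ((hπm t).mono (𝓕.le t)).aestronglyMeasurable) hmem hlim hmean hsq⟩
  refine (tendsto_add_atTop_iff_nat 1).1 (tendsto_of_succ_eq_add_mul_sub (fun t => hr_sq01 (t + 1))
    (hr_sq1.comp (tendsto_add_atTop_nat 1)) fun t => ?_)
  exact harec (t + 1) (Nat.le_add_left 1 t)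

/-- For the Pólya urn with geometric reward `R_t = ρ N_{t-1}^γ`, `ρ > 0`, `γ > 1`, the
variance coefficients `a_t` increase to `1`, and the limiting share `π_{k,∞}` lies in
`{0,1}` almost surely, with `P(π_{k,∞} = 1) = π_{k,0}` and
`P(π_{k,∞} = 0) = 1 − π_{k,0}`. -/
theorem pos_share_chaotic_centralization_geometric_reward
    {Ω : Type*} {m0 : MeasurableSpace Ω} (μ : Measure Ω) [IsProbabilityMeasure μ]
    (𝓕 : Filtration ℕ m0)
    (π : ℕ → Ω → ℝ) (πlim : Ω → ℝ) (S : ℕ → Set Ω)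
    (ρ γ N p : ℝ) (R Nt a : ℕ → ℝ)
    (hρ : 0 < ρ) (hγ : 1 < γ) (hN : 0 < N)
    (hN0 : Nt 0 = N)
    (hR : ∀ t, R (t + 1) = ρ * Nt t ^ γ)
    (hNt : ∀ t, Nt (t + 1) = Nt t + R (t + 1))
    (hadapted : Adapted 𝓕 π)
    (hmem : ∀ t ω, π t ω ∈ Set.Icc (0 : ℝ) 1)
    (hSmeas : ∀ t, MeasurableSet[𝓕 (t + 1)] (S (t + 1)))
    (hcond : ∀ t, μ[(S (t + 1)).indicator (fun _ => (1 : ℝ)) | 𝓕 t] =ᵐ[μ] π t)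
    (hrec : ∀ t, π (t + 1) = fun ω =>
      (Nt t / Nt (t + 1)) * π t ω + (R (t + 1) / Nt (t + 1)) * (S (t + 1)).indicator 1 ω)
    (hπ0 : π 0 = fun _ => p)
    (ha1 : a 1 = (R 1 / Nt 1) ^ 2)
    (harec : ∀ t, 1 ≤ t → a (t + 1) = a t + (R (t + 1) / Nt (t + 1)) ^ 2 * (1 - a t))
    (hlim : ∀ᵐ ω ∂μ, Tendsto (fun t => π t ω) atTop (nhds (πlim ω))) :
    Tendsto a atTop (nhds 1) ∧
    (∀ᵐ ω ∂μ, πlim ω = 0 ∨ πlim ω = 1) ∧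
    μ {ω | πlim ω = 1} = ENNReal.ofReal p ∧
    μ {ω | πlim ω = 0} = ENNReal.ofReal (1 - p) :=
  pos_share_chaotic_centralization_geometric_reward_general μ 𝓕 π πlim S ρ γ N p R Nt a hρ hγ hN hN0
    hR hNt hadapted hmem hSmeas hcond hrec hπ0 harec hlim
end

section
/- For the Pólya urn with sub-geometric reward R_t = ρ·N_{t-1}^γ, 0 < γ < 1, and a large investor with n_{k,0} = f(N) satisfying f(N)/N^γ → ∞: for each ε > 0 and each t ≥ 1 or t = ∞, P(|π_{k,t}/π_{k,0} − 1| > ε) ≤ ρ·N^γ/((1−γ)·n_{k,0}·ε²), which converges to 0 as N → ∞. -/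
open MeasureTheory Filter Set ProbabilityTheory Finset Topology

/-!
The share `π_t` is a martingale: a draw succeeds with conditional probability `π_t`, and
`π_{t+1} = (1 - b_t) π_t + b_t 1_{S_{t+1}}` with `b_t = R_{t+1}/N_{t+1}`. Expanding the square gives
`E π_{t+1}² = (1 - b_t²) E π_t² + b_t² π_0`, hence `Var π_t ≤ π_0 ∑_{s<t} b_s²`. For the reward
`ρ N^γ`, the tangent-line (Bernoulli) inequality for `x ↦ x^(γ-1)` gives
`b_s² ≤ ρ/(1-γ) (N_s^(γ-1) - N_{s+1}^(γ-1))`, so the sum telescopes to at most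
`ρ/(1-γ) N_0^(γ-1)`. Chebyshev's inequality bounds `P(|π_t/π_0 - 1| > ε)`, and the bound passes
to the a.s. limit because `{|π_∞/π_0 - 1| > ε}` is a.s. contained in
`⋃_T ⋂_{t ≥ T} {|π_t/π_0 - 1| > ε}`.
-/

lemma one_add_mul_one_sub_le_rpow_neg {q r : ℝ} (hq0 : 0 ≤ q) (hq1 : q ≤ 1) (hr : 0 < r) :
    1 + q * (1 - r) ≤ r ^ (-q) := by
  rcases le_or_gt (1 + q * (1 - r)) 0 with hneg | hpos
  · exact hneg.trans (Real.rpow_pos_of_pos hr _).le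
  have hbern : r ^ q ≤ 1 + q * (r - 1) := by
    simpa using rpow_one_add_le_one_add_mul_self (s := r - 1) (by linarith) hq0 hq1
  have hrq : 0 < r ^ q := Real.rpow_pos_of_pos hr _
  rw [Real.rpow_neg hr.le, ← one_div, le_div_iff₀ hrq]
  nlinarith [mul_le_mul_of_nonneg_left hbern hpos.le, sq_nonneg (q * (1 - r))]

lemma one_sub_mul_sub_mul_rpow_le {γ x y : ℝ} (hγ0 : 0 ≤ γ) (hγ1 : γ ≤ 1) (hx : 0 < x)
    (hy : 0 < y) : (1 - γ) * (y - x) * y ^ (γ - 2) ≤ x ^ (γ - 1) - y ^ (γ - 1) := by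
  have h := one_add_mul_one_sub_le_rpow_neg (by linarith : 0 ≤ 1 - γ) (by linarith)
    (div_pos hx hy)
  have hy1 : 0 < y ^ (γ - 1) := Real.rpow_pos_of_pos hy _
  rw [neg_sub, Real.div_rpow hx.le hy.le, le_div_iff₀ hy1] at h
  rw [show γ - 2 = γ - 1 - 1 by ring, Real.rpow_sub hy, Real.rpow_one]
  have : (1 - γ) * (y - x) * (y ^ (γ - 1) / y) = (1 - γ) * (1 - x / y) * y ^ (γ - 1) := by
    field_simp
  linarith

lemma sq_rpow_div_add_rpow_le {ρ γ n : ℝ} (hρ : 0 < ρ) (hγ0 : 0 ≤ γ) (hγ1 : γ < 1) (hn : 0 < n) :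
    (ρ * n ^ γ / (n + ρ * n ^ γ)) ^ 2
      ≤ ρ / (1 - γ) * (n ^ (γ - 1) - (n + ρ * n ^ γ) ^ (γ - 1)) := by
  set R := ρ * n ^ γ
  set n' := n + R
  have hR : 0 < R := by positivity
  have hn' : 0 < n' := by positivity
  have hRn' : R ≤ ρ * n' ^ γ :=
    mul_le_mul_of_nonneg_left (Real.rpow_le_rpow hn.le (by linarith) hγ0) hρ.le
  have hsq : (R / n') ^ 2 ≤ ρ * R * n' ^ (γ - 2) := by
    rw [show γ - 2 = γ - (2 : ℕ) by norm_num, Real.rpow_sub hn', Real.rpow_natCast, div_pow,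
      ← mul_div_assoc]
    gcongr
    nlinarith
  have htangent := one_sub_mul_sub_mul_rpow_le hγ0 hγ1.le hn hn'
  have hsub : n' - n = R := by ring
  rw [hsub] at htangent
  calc (R / n') ^ 2 ≤ ρ * R * n' ^ (γ - 2) := hsq
    _ = ρ / (1 - γ) * ((1 - γ) * R * n' ^ (γ - 2)) := by field_simp [(by linarith : 1 - γ ≠ 0)]
    _ ≤ _ := mul_le_mul_of_nonneg_left htangent (div_nonneg hρ.le (by linarith))

section SubgeometricReward

variable {ρ γ : ℝ} {N : ℕ → ℝ}

lemma pos_of_succ_eq_add_mul_rpow (hρ : 0 ≤ ρ) (hN0 : 0 < N 0)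
    (hN : ∀ t, N (t + 1) = N t + ρ * N t ^ γ) (t : ℕ) : 0 < N t := by
  induction t with
  | zero => exact hN0
  | succ t ih => rw [hN]; have := Real.rpow_pos_of_pos ih γ; positivity

lemma sum_sq_reward_div_le (hρ : 0 < ρ) (hγ0 : 0 ≤ γ) (hγ1 : γ < 1) (hN0 : 0 < N 0)
    (hN : ∀ t, N (t + 1) = N t + ρ * N t ^ γ) (t : ℕ) :
    ∑ s ∈ range t, (ρ * N s ^ γ / N (s + 1)) ^ 2 ≤ ρ / (1 - γ) * N 0 ^ (γ - 1) := by
  have hpos := pos_of_succ_eq_add_mul_rpow hρ.le hN0 hN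
  calc ∑ s ∈ range t, (ρ * N s ^ γ / N (s + 1)) ^ 2
      ≤ ∑ s ∈ range t, ρ / (1 - γ) * (N s ^ (γ - 1) - N (s + 1) ^ (γ - 1)) := by
        gcongr with s
        rw [hN]
        exact sq_rpow_div_add_rpow_le hρ hγ0 hγ1 (hpos s)
    _ = ρ / (1 - γ) * (N 0 ^ (γ - 1) - N t ^ (γ - 1)) := by
        rw [← mul_sum, sum_range_sub']
    _ ≤ ρ / (1 - γ) * N 0 ^ (γ - 1) :=
        mul_le_mul_of_nonneg_left (sub_le_self _ (Real.rpow_nonneg (hpos t).le _))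
          (div_nonneg hρ.le (by linarith))

end SubgeometricReward

section Deviation

variable {Ω : Type*} {m0 : MeasurableSpace Ω} {μ : Measure Ω}

lemma meas_lt_abs_div_sub_one_le [IsFiniteMeasure μ] {X : Ω → ℝ} (hX : MemLp X 2 μ)
    {p ε : ℝ} (hp : 0 < p) (hε : 0 < ε) (hmean : μ[X] = p) :
    μ {ω | ε < |X ω / p - 1|} ≤ ENNReal.ofReal (variance X μ / (ε * p) ^ 2) := by
  refine (measure_mono fun ω hω => ?_).trans (meas_ge_le_variance_div_sq hX (mul_pos hε hp))
  simp only [mem_ofPred_eq, hmean] at hω ⊢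
  rw [div_sub_one hp.ne', abs_div, abs_of_pos hp, lt_div_iff₀ hp] at hω
  exact hω.le

lemma measure_preimage_le_of_ae_tendsto {E : Type*} [TopologicalSpace E] {X : ℕ → Ω → E}
    {Y : Ω → E} (hlim : ∀ᵐ ω ∂μ, Tendsto (fun t => X t ω) atTop (𝓝 (Y ω))) {U : Set E}
    (hU : IsOpen U) {c : ENNReal} (hc : ∀ t, μ (X t ⁻¹' U) ≤ c) : μ (Y ⁻¹' U) ≤ c := by
  have hsub : Y ⁻¹' U ≤ᵐ[μ] ⋃ T, ⋂ t ≥ T, X t ⁻¹' U := by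
    filter_upwards [hlim] with ω hω hYω
    obtain ⟨T, hT⟩ := eventually_atTop.mp (hω.eventually (hU.mem_nhds hYω))
    exact mem_iUnion.mpr ⟨T, mem_iInter₂.mpr hT⟩
  have hmono : Monotone fun T => ⋂ t ≥ T, X t ⁻¹' U := fun _ _ hTT' _ hx =>
    mem_iInter₂.mpr fun t ht => mem_iInter₂.mp hx t (hTT'.trans ht)
  calc μ (Y ⁻¹' U) ≤ μ (⋃ T, ⋂ t ≥ T, X t ⁻¹' U) := measure_mono_ae hsub
    _ = ⨆ T, μ (⋂ t ≥ T, X t ⁻¹' U) := hmono.measure_iUnion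
    _ ≤ c := iSup_le fun T => (measure_mono (iInter₂_subset T le_rfl)).trans (hc T)

end Deviation

/-- `π t` is an investor's share after `t` draws: the draw `S (t + 1)` succeeds with conditional
probability `π t`, and on success the investor receives the fraction `b t` of the new total. -/
structure IsUrnShareProcess {Ω : Type*} {m0 : MeasurableSpace Ω} (μ : Measure Ω)
    (𝓕 : Filtration ℕ m0) (π : ℕ → Ω → ℝ) (S : ℕ → Set Ω) (b : ℕ → ℝ) (p : ℝ) : Prop where
  adapted : Adapted 𝓕 π
  mem_Icc : ∀ t ω, π t ω ∈ Icc (0 : ℝ) 1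
  measurableSet_draw : ∀ t, MeasurableSet[𝓕 (t + 1)] (S (t + 1))
  condExp_draw : ∀ t, μ[(S (t + 1)).indicator (fun _ => (1 : ℝ)) | 𝓕 t] =ᵐ[μ] π t
  succ : ∀ t, π (t + 1) = fun ω =>
    (1 - b t) * π t ω + b t * (S (t + 1)).indicator (fun _ => (1 : ℝ)) ω
  zero : π 0 = fun _ => p

namespace IsUrnShareProcess

variable {Ω : Type*} {m0 : MeasurableSpace Ω} {μ : Measure Ω} {𝓕 : Filtration ℕ m0}
  {π : ℕ → Ω → ℝ} {S : ℕ → Set Ω} {b : ℕ → ℝ} {p ε B : ℝ}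

lemma norm_le_one (h : IsUrnShareProcess μ 𝓕 π S b p) (t : ℕ) (ω : Ω) : ‖π t ω‖ ≤ 1 := by
  rw [Real.norm_eq_abs, abs_le]
  exact ⟨by linarith [(h.mem_Icc t ω).1], (h.mem_Icc t ω).2⟩

lemma memLp [IsFiniteMeasure μ] (h : IsUrnShareProcess μ 𝓕 π S b p) (t : ℕ) :
    MemLp (π t) 2 μ :=
  (memLp_top_of_bound ((h.adapted t).mono (𝓕.le t) le_rfl).aestronglyMeasurable 1
    (Eventually.of_forall (h.norm_le_one t))).mono_exponent le_top

lemma integrable_draw [IsFiniteMeasure μ] (h : IsUrnShareProcess μ 𝓕 π S b p) (t : ℕ) :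
    Integrable ((S (t + 1)).indicator (fun _ => (1 : ℝ))) μ :=
  (integrable_const 1).indicator (𝓕.le (t + 1) _ (h.measurableSet_draw t))

lemma integral_draw [IsFiniteMeasure μ] (h : IsUrnShareProcess μ 𝓕 π S b p) (t : ℕ) :
    ∫ ω, (S (t + 1)).indicator (fun _ => (1 : ℝ)) ω ∂μ = ∫ ω, π t ω ∂μ := by
  rw [← integral_condExp (𝓕.le t)]
  exact integral_congr_ae (h.condExp_draw t)

lemma integrable_mul_draw [IsFiniteMeasure μ] (h : IsUrnShareProcess μ 𝓕 π S b p) (t : ℕ) :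
    Integrable (fun ω => π t ω * (S (t + 1)).indicator (fun _ => (1 : ℝ)) ω) μ :=
  (h.integrable_draw t).bdd_mul (h.memLp t).aestronglyMeasurable (c := 1)
    (Eventually.of_forall (h.norm_le_one t))

lemma integral_mul_draw [IsFiniteMeasure μ] (h : IsUrnShareProcess μ 𝓕 π S b p) (t : ℕ) :
    ∫ ω, π t ω * (S (t + 1)).indicator (fun _ => (1 : ℝ)) ω ∂μ = ∫ ω, π t ω ^ 2 ∂μ := by
  have hpull := condExp_mul_of_stronglyMeasurable_left (h.adapted t).stronglyMeasurable
    (h.integrable_mul_draw t) (h.integrable_draw t)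
  rw [← integral_condExp (𝓕.le t)]
  refine integral_congr_ae (hpull.trans ?_)
  filter_upwards [h.condExp_draw t] with ω hω
  simp only [Pi.mul_apply, hω, sq]

lemma integral_eq [IsProbabilityMeasure μ] (h : IsUrnShareProcess μ 𝓕 π S b p) (t : ℕ) :
    ∫ ω, π t ω ∂μ = p := by
  induction t with
  | zero => simp [h.zero]
  | succ t ih =>
    rw [h.succ, integral_add ((h.memLp t).integrable one_le_two |>.const_mul _)
      ((h.integrable_draw t).const_mul _), integral_const_mul, integral_const_mul,
      h.integral_draw, ih]
    ring

lemma integral_sq_succ [IsProbabilityMeasure μ] (h : IsUrnShareProcess μ 𝓕 π S b p) (t : ℕ) :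
    ∫ ω, π (t + 1) ω ^ 2 ∂μ = (1 - b t ^ 2) * ∫ ω, π t ω ^ 2 ∂μ + b t ^ 2 * p := by
  have hsq : (fun ω => π (t + 1) ω ^ 2) = fun ω => ((1 - b t) ^ 2 * π t ω ^ 2
      + 2 * (1 - b t) * b t * (π t ω * (S (t + 1)).indicator (fun _ => (1 : ℝ)) ω))
      + b t ^ 2 * (S (t + 1)).indicator (fun _ => (1 : ℝ)) ω := by
    funext ω
    rw [h.succ]
    by_cases hω : ω ∈ S (t + 1)
    · simp only [indicator_of_mem hω]; ring
    · simp only [indicator_of_notMem hω]; ring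
  have hint : Integrable (fun ω => (1 - b t) ^ 2 * π t ω ^ 2
      + 2 * (1 - b t) * b t * (π t ω * (S (t + 1)).indicator (fun _ => (1 : ℝ)) ω)) μ :=
    ((h.memLp t).integrable_sq.const_mul _).add ((h.integrable_mul_draw t).const_mul _)
  rw [hsq, integral_add hint ((h.integrable_draw t).const_mul _),
    integral_add ((h.memLp t).integrable_sq.const_mul _)
      ((h.integrable_mul_draw t).const_mul _),
    integral_const_mul, integral_const_mul, integral_const_mul, h.integral_mul_draw,
    h.integral_draw, h.integral_eq]
  ring

lemma integral_sq_le [IsProbabilityMeasure μ] (h : IsUrnShareProcess μ 𝓕 π S b p) (t : ℕ) :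
    ∫ ω, π t ω ^ 2 ∂μ ≤ p ^ 2 + p * ∑ s ∈ range t, b s ^ 2 := by
  induction t with
  | zero => simp [h.zero]
  | succ t ih =>
    have hnonneg : 0 ≤ ∫ ω, π t ω ^ 2 ∂μ := integral_nonneg fun ω => sq_nonneg _
    rw [h.integral_sq_succ, sum_range_succ]
    nlinarith [mul_nonneg (sq_nonneg (b t)) hnonneg]

lemma variance_le [IsProbabilityMeasure μ] (h : IsUrnShareProcess μ 𝓕 π S b p) (t : ℕ) :
    variance (π t) μ ≤ p * ∑ s ∈ range t, b s ^ 2 := by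
  rw [variance_eq_sub (h.memLp t)]
  have hmean : μ[π t] = p := h.integral_eq t
  simp only [Pi.pow_apply, hmean]
  linarith [h.integral_sq_le t]

lemma meas_lt_abs_div_sub_one_le [IsProbabilityMeasure μ]
    (h : IsUrnShareProcess μ 𝓕 π S b p) (hp : 0 < p) (hε : 0 < ε)
    (hB : ∀ t, ∑ s ∈ range t, b s ^ 2 ≤ B) (t : ℕ) :
    μ {ω | ε < |π t ω / p - 1|} ≤ ENNReal.ofReal (B / (ε ^ 2 * p)) := by
  refine (_root_.meas_lt_abs_div_sub_one_le (h.memLp t) hp hε (h.integral_eq t)).trans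
    (ENNReal.ofReal_le_ofReal ?_)
  calc variance (π t) μ / (ε * p) ^ 2 ≤ p * B / (ε * p) ^ 2 := by
        gcongr
        exact (h.variance_le t).trans (mul_le_mul_of_nonneg_left (hB t) hp.le)
    _ = B / (ε ^ 2 * p) := by field_simp

lemma meas_lt_abs_lim_div_sub_one_le [IsProbabilityMeasure μ]
    (h : IsUrnShareProcess μ 𝓕 π S b p) {πlim : Ω → ℝ}
    (hlim : ∀ᵐ ω ∂μ, Tendsto (fun t => π t ω) atTop (𝓝 (πlim ω))) (hp : 0 < p)
    (hε : 0 < ε) (hB : ∀ t, ∑ s ∈ range t, b s ^ 2 ≤ B) :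
    μ {ω | ε < |πlim ω / p - 1|} ≤ ENNReal.ofReal (B / (ε ^ 2 * p)) :=
  measure_preimage_le_of_ae_tendsto hlim (U := {x | ε < |x / p - 1|})
    (isOpen_lt continuous_const (by fun_prop)) (h.meas_lt_abs_div_sub_one_le hp hε hB)

end IsUrnShareProcess

theorem pos_share_concentration_large_investor_subgeometric_reward_general
    {Ω : ℕ → Type*} {m0 : ∀ ν, MeasurableSpace (Ω ν)}
    (μ : ∀ ν, Measure (Ω ν)) [∀ ν, IsProbabilityMeasure (μ ν)]
    (𝓕 : ∀ ν, Filtration ℕ (m0 ν))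
    (π : ∀ ν, ℕ → Ω ν → ℝ) (πlim : ∀ ν, Ω ν → ℝ) (S : ∀ ν, ℕ → Set (Ω ν))
    (ρ γ : ℝ) (Nval f : ℕ → ℝ) (R Nt : ℕ → ℕ → ℝ)
    (hρ : 0 < ρ) (hγ0 : 0 < γ) (hγ : γ < 1)
    (hNpos : ∀ ν, 0 < Nval ν)
    (hf : Tendsto (fun ν => f ν / Nval ν ^ γ) atTop atTop)
    (hfN : ∀ ν, 0 < f ν ∧ f ν ≤ Nval ν)
    (hN0 : ∀ ν, Nt ν 0 = Nval ν)
    (hR : ∀ ν t, R ν (t + 1) = ρ * Nt ν t ^ γ)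
    (hNt : ∀ ν t, Nt ν (t + 1) = Nt ν t + R ν (t + 1))
    (hadapted : ∀ ν, Adapted (𝓕 ν) (π ν))
    (hmem : ∀ ν t ω, π ν t ω ∈ Set.Icc (0 : ℝ) 1)
    (hSmeas : ∀ ν t, MeasurableSet[𝓕 ν (t + 1)] (S ν (t + 1)))
    (hcond : ∀ ν t,
      (μ ν)[(S ν (t + 1)).indicator (fun _ => (1 : ℝ)) | 𝓕 ν t] =ᵐ[μ ν] π ν t)
    (hrec : ∀ ν t, π ν (t + 1) = fun ω =>
      (Nt ν t / Nt ν (t + 1)) * π ν t ω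
        + (R ν (t + 1) / Nt ν (t + 1)) * (S ν (t + 1)).indicator 1 ω)
    (hπ0 : ∀ ν, π ν 0 = fun _ => f ν / Nval ν)
    (hlim : ∀ ν, ∀ᵐ ω ∂(μ ν), Tendsto (fun t => π ν t ω) atTop (nhds (πlim ν ω))) :
    ∀ ε > (0 : ℝ),
      (∀ ν, (∀ t : ℕ, 1 ≤ t →
          (μ ν {ω | ε < |π ν t ω / (f ν / Nval ν) - 1|}).toReal
            ≤ ρ * Nval ν ^ γ / ((1 - γ) * f ν * ε ^ 2)) ∧
        (μ ν {ω | ε < |πlim ν ω / (f ν / Nval ν) - 1|}).toReal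
            ≤ ρ * Nval ν ^ γ / ((1 - γ) * f ν * ε ^ 2)) ∧
      Tendsto (fun ν => ρ * Nval ν ^ γ / ((1 - γ) * f ν * ε ^ 2)) atTop (nhds 0) := by
  intro ε hε
  refine ⟨fun ν => ?_, ?_⟩
  · have hN : ∀ t, Nt ν (t + 1) = Nt ν t + ρ * Nt ν t ^ γ := fun t => by rw [hNt, hR]
    have hNt0 : 0 < Nt ν 0 := hN0 ν ▸ hNpos ν
    have hNtpos := pos_of_succ_eq_add_mul_rpow hρ.le hNt0 hN
    have hshare : IsUrnShareProcess (μ ν) (𝓕 ν) (π ν) (S ν)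
        (fun t => ρ * Nt ν t ^ γ / Nt ν (t + 1)) (f ν / Nval ν) :=
      ⟨hadapted ν, hmem ν, hSmeas ν, hcond ν, fun t => by
        rw [hrec, hR, one_sub_div (hNtpos (t + 1)).ne', hN, add_sub_cancel_right]; rfl, hπ0 ν⟩
    have hB := sum_sq_reward_div_le hρ hγ0.le hγ hNt0 hN
    have hp : 0 < f ν / Nval ν := div_pos (hfN ν).1 (hNpos ν)
    have hbound : ρ / (1 - γ) * Nt ν 0 ^ (γ - 1) / (ε ^ 2 * (f ν / Nval ν))
        = ρ * Nval ν ^ γ / ((1 - γ) * f ν * ε ^ 2) := by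
      rw [hN0, Real.rpow_sub_one (hNpos ν).ne']
      field_simp [(hNpos ν).ne', (hfN ν).1.ne']
    have hbound0 : 0 ≤ ρ / (1 - γ) * Nt ν 0 ^ (γ - 1) / (ε ^ 2 * (f ν / Nval ν)) :=
      div_nonneg ((hB 0).trans' (by simp)) (by positivity)
    rw [← hbound]
    exact ⟨fun t _ => ENNReal.toReal_le_of_le_ofReal hbound0
        (hshare.meas_lt_abs_div_sub_one_le hp hε hB t),
      ENNReal.toReal_le_of_le_ofReal hbound0
        (hshare.meas_lt_abs_lim_div_sub_one_le (hlim ν) hp hε hB)⟩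
  · refine ((tendsto_const_nhds (x := ρ / ((1 - γ) * ε ^ 2))).div_atTop hf).congr fun ν => ?_
    rw [div_div_eq_mul_div, div_mul_eq_mul_div, div_div, mul_right_comm (1 - γ)]

/-- For the Pólya urn with sub-geometric reward `R_t = ρ N_{t-1}^γ`, `0 < γ < 1`, and a
large investor with `n_{k,0} = f(N)` satisfying `f(N)/N^γ → ∞`: for each `ε > 0` and
each `t ≥ 1` or `t = ∞`,
`P(|π_{k,t}/π_{k,0} − 1| > ε) ≤ ρ N^γ/((1−γ) n_{k,0} ε²)`, a bound which converges to
`0` as `N → ∞`.  The urn models are indexed by `ν`, with total initial coins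
`Nval ν → ∞`, investor `k` initially owning `f ν` coins, and `πlim ν` the a.s. limit of
the share martingale. -/
theorem pos_share_concentration_large_investor_subgeometric_reward
    {Ω : ℕ → Type*} {m0 : ∀ ν, MeasurableSpace (Ω ν)}
    (μ : ∀ ν, Measure (Ω ν)) [∀ ν, IsProbabilityMeasure (μ ν)]
    (𝓕 : ∀ ν, Filtration ℕ (m0 ν))
    (π : ∀ ν, ℕ → Ω ν → ℝ) (πlim : ∀ ν, Ω ν → ℝ) (S : ∀ ν, ℕ → Set (Ω ν))
    (ρ γ : ℝ) (Nval f : ℕ → ℝ) (R Nt : ℕ → ℕ → ℝ)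
    (hρ : 0 < ρ) (hγ0 : 0 < γ) (hγ : γ < 1)
    (hNval : Tendsto Nval atTop atTop)
    (hNpos : ∀ ν, 0 < Nval ν)
    (hf : Tendsto (fun ν => f ν / Nval ν ^ γ) atTop atTop)
    (hfN : ∀ ν, 0 < f ν ∧ f ν ≤ Nval ν)
    (hN0 : ∀ ν, Nt ν 0 = Nval ν)
    (hR : ∀ ν t, R ν (t + 1) = ρ * Nt ν t ^ γ)
    (hNt : ∀ ν t, Nt ν (t + 1) = Nt ν t + R ν (t + 1))
    (hadapted : ∀ ν, Adapted (𝓕 ν) (π ν))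
    (hmem : ∀ ν t ω, π ν t ω ∈ Set.Icc (0 : ℝ) 1)
    (hSmeas : ∀ ν t, MeasurableSet[𝓕 ν (t + 1)] (S ν (t + 1)))
    (hcond : ∀ ν t,
      (μ ν)[(S ν (t + 1)).indicator (fun _ => (1 : ℝ)) | 𝓕 ν t] =ᵐ[μ ν] π ν t)
    (hrec : ∀ ν t, π ν (t + 1) = fun ω =>
      (Nt ν t / Nt ν (t + 1)) * π ν t ω
        + (R ν (t + 1) / Nt ν (t + 1)) * (S ν (t + 1)).indicator 1 ω)
    (hπ0 : ∀ ν, π ν 0 = fun _ => f ν / Nval ν)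
    (hlim : ∀ ν, ∀ᵐ ω ∂(μ ν), Tendsto (fun t => π ν t ω) atTop (nhds (πlim ν ω))) :
    ∀ ε > (0 : ℝ),
      (∀ ν, (∀ t : ℕ, 1 ≤ t →
          (μ ν {ω | ε < |π ν t ω / (f ν / Nval ν) - 1|}).toReal
            ≤ ρ * Nval ν ^ γ / ((1 - γ) * f ν * ε ^ 2)) ∧
        (μ ν {ω | ε < |πlim ν ω / (f ν / Nval ν) - 1|}).toReal
            ≤ ρ * Nval ν ^ γ / ((1 - γ) * f ν * ε ^ 2)) ∧
      Tendsto (fun ν => ρ * Nval ν ^ γ / ((1 - γ) * f ν * ε ^ 2)) atTop (nhds 0) :=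
  pos_share_concentration_large_investor_subgeometric_reward_general μ 𝓕 π πlim S ρ γ Nval f R Nt hρ
    hγ0 hγ hNpos hf hfN hN0 hR hNt hadapted hmem hSmeas hcond hrec hπ0 hlim
end

section
/- In the dynamical population PoS model with dilution parameter θ > 0, each initial investor's share process (π_{k,t}, t ≥ 0) is a supermartingale: E[π_{k,t+1} | F_t] = n_{k,t}(N_t + θ + R_{t+1})/((N_t + R_{t+1})(N_t + θ)) < π_{k,t}. -/
/-!
Conditionally on `𝓕_t`, investor `k` wins the reward with probability `n_{k,t}/(N_t + θ)`, so
`E[π_{k,t+1} | 𝓕_t] = (n_{k,t} + R_{t+1} n_{k,t}/(N_t + θ))/(N_t + R_{t+1})`. Comparing with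
`n_{k,t}/N_t`, the difference has the sign of `-θ R_{t+1} n_{k,t}`: the mass `θ` reserved for new
investors is what makes the share drift strictly downwards.
-/

open MeasureTheory Filter Set

section CondExp

variable {Ω : Type*} {m m0 : MeasurableSpace Ω} {μ : Measure Ω} [IsFiniteMeasure μ]

lemma condExp_add_mul_indicator_div (hm : m ≤ m0) {f : Ω → ℝ} (hf : StronglyMeasurable[m] f)
    (hfi : Integrable f μ) {s : Set Ω} (hs : MeasurableSet s) (r c : ℝ) :
    μ[fun ω => (f ω + r * s.indicator 1 ω) / c | m]
      =ᵐ[μ] fun ω => (f ω + r * μ[s.indicator 1 | m] ω) / c := by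
  have hind : Integrable (s.indicator (1 : Ω → ℝ)) μ := (integrable_const 1).indicator hs
  have hsplit : (fun ω => (f ω + r * s.indicator 1 ω) / c)
      = c⁻¹ • f + (c⁻¹ * r) • s.indicator (1 : Ω → ℝ) := by
    funext ω
    simp only [Pi.add_apply, Pi.smul_apply, smul_eq_mul]
    ring
  rw [hsplit]
  filter_upwards [condExp_add (hfi.smul c⁻¹) (hind.smul (c⁻¹ * r)) m,
    condExp_smul c⁻¹ f m, condExp_smul (c⁻¹ * r) (s.indicator (1 : Ω → ℝ)) m]
    with ω hadd hf' hs'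
  rw [hadd, Pi.add_apply, hf', hs', condExp_of_stronglyMeasurable hm hf hfi]
  simp only [Pi.smul_apply, smul_eq_mul]
  ring

end CondExp

section ShareUpdate

variable {x N θ R : ℝ}

lemma share_update_eq (hN : 0 < N) (hθ : 0 < θ) (hR : 0 < R) :
    (x + R * (x / (N + θ))) / (N + R) = x * (N + θ + R) / ((N + R) * (N + θ)) := by
  field_simp

lemma share_update_lt (hx : 0 < x) (hN : 0 < N) (hθ : 0 < θ) (hR : 0 < R) :
    x * (N + θ + R) / ((N + R) * (N + θ)) < x / N := by
  rw [div_lt_div_iff₀ (by positivity) hN]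
  nlinarith [mul_pos (mul_pos hx hR) hθ]

end ShareUpdate

theorem dynamical_pos_share_supermartingale_general
    {Ω : Type*} {m0 : MeasurableSpace Ω} (μ : Measure Ω) [IsProbabilityMeasure μ]
    (𝓕 : Filtration ℕ m0)
    (n : ℕ → Ω → ℝ) (π : ℕ → Ω → ℝ) (S : ℕ → Set Ω)
    (R : ℕ → ℝ) (Nt : ℕ → ℝ) (θ n₀ : ℝ)
    (hθ : 0 < θ) (hn₀ : 0 < n₀)
    (hR : ∀ t, 0 < R (t + 1))
    (hNt : ∀ t, Nt (t + 1) = Nt t + R (t + 1))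
    (hadapted : Adapted 𝓕 n)
    (hmem : ∀ t ω, n₀ ≤ n t ω ∧ n t ω ≤ Nt t)
    (hSmeas : ∀ t, MeasurableSet[𝓕 (t + 1)] (S (t + 1)))
    (hcond : ∀ t, μ[(S (t + 1)).indicator (fun _ => (1 : ℝ)) | 𝓕 t]
      =ᵐ[μ] fun ω => n t ω / (Nt t + θ))
    (hnrec : ∀ t, n (t + 1) = fun ω => n t ω + R (t + 1) * (S (t + 1)).indicator 1 ω)
    (hπ : ∀ t, π t = fun ω => n t ω / Nt t) :
    Supermartingale π 𝓕 μ ∧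
    ∀ t, μ[π (t + 1) | 𝓕 t]
        =ᵐ[μ] (fun ω => n t ω * (Nt t + θ + R (t + 1))
          / ((Nt t + R (t + 1)) * (Nt t + θ))) ∧
      ∀ ω, n t ω * (Nt t + θ + R (t + 1)) / ((Nt t + R (t + 1)) * (Nt t + θ))
          < π t ω := by
  have hn_pos (t : ℕ) (ω : Ω) : 0 < n t ω := hn₀.trans_le (hmem t ω).1
  have hNt_pos (t : ℕ) (ω : Ω) : 0 < Nt t := (hn_pos t ω).trans_le (hmem t ω).2
  have hn_int (t : ℕ) : Integrable (n t) μ :=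
    .of_bound ((hadapted t).mono (𝓕.le t) le_rfl).aestronglyMeasurable (Nt t) <|
      ae_of_all _ fun ω => by rw [Real.norm_of_nonneg (hn_pos t ω).le]; exact (hmem t ω).2
  have hlt (t : ℕ) (ω : Ω) : n t ω * (Nt t + θ + R (t + 1))
      / ((Nt t + R (t + 1)) * (Nt t + θ)) < π t ω := by
    rw [hπ]; exact share_update_lt (hn_pos t ω) (hNt_pos t ω) hθ (hR t)
  have hstep (t : ℕ) : μ[π (t + 1) | 𝓕 t] =ᵐ[μ] fun ω => n t ω * (Nt t + θ + R (t + 1))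
      / ((Nt t + R (t + 1)) * (Nt t + θ)) := by
    rw [hπ, hnrec]
    filter_upwards [condExp_add_mul_indicator_div (𝓕.le t) (hadapted t).stronglyMeasurable
      (hn_int t) (𝓕.le (t + 1) _ (hSmeas t)) (R (t + 1)) (Nt (t + 1)), hcond t] with ω hω hSω
    rw [hω, show μ[(S (t + 1)).indicator 1 | 𝓕 t] ω = _ from hSω, hNt]
    exact share_update_eq (hNt_pos t ω) hθ (hR t)
  refine ⟨supermartingale_nat ?_ ?_ ?_, fun t => ⟨hstep t, hlt t⟩⟩
  · exact fun t => by rw [hπ]; exact ((hadapted t).div_const _).stronglyMeasurable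
  · exact fun t => by rw [hπ]; exact (hn_int t).div_const _
  · exact fun t => (hstep t).trans_le (ae_of_all _ fun ω => (hlt t ω).le)

/-- In the dynamical population PoS model with dilution parameter `θ > 0`, each initial
investor's share process `(π_{k,t})` is a supermartingale:
`E[π_{k,t+1} | 𝓕_t] = n_{k,t}(N_t + θ + R_{t+1})/((N_t + R_{t+1})(N_t + θ)) < π_{k,t}`. -/
theorem dynamical_pos_share_supermartingale
    {Ω : Type*} {m0 : MeasurableSpace Ω} (μ : Measure Ω) [IsProbabilityMeasure μ]
    (𝓕 : Filtration ℕ m0)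
    (n : ℕ → Ω → ℝ) (π : ℕ → Ω → ℝ) (S : ℕ → Set Ω)
    (R : ℕ → ℝ) (Nt : ℕ → ℝ) (θ N n₀ : ℝ)
    (hθ : 0 < θ) (hN : 0 < N) (hn₀ : 0 < n₀) (hn₀N : n₀ ≤ N)
    (hR : ∀ t, 0 < R (t + 1))
    (hN0 : Nt 0 = N)
    (hNt : ∀ t, Nt (t + 1) = Nt t + R (t + 1))
    (hn0 : n 0 = fun _ => n₀)
    (hadapted : Adapted 𝓕 n)
    (hmem : ∀ t ω, n₀ ≤ n t ω ∧ n t ω ≤ Nt t)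
    (hSmeas : ∀ t, MeasurableSet[𝓕 (t + 1)] (S (t + 1)))
    (hcond : ∀ t, μ[(S (t + 1)).indicator (fun _ => (1 : ℝ)) | 𝓕 t]
      =ᵐ[μ] fun ω => n t ω / (Nt t + θ))
    (hnrec : ∀ t, n (t + 1) = fun ω => n t ω + R (t + 1) * (S (t + 1)).indicator 1 ω)
    (hπ : ∀ t, π t = fun ω => n t ω / Nt t) :
    Supermartingale π 𝓕 μ ∧
    ∀ t, μ[π (t + 1) | 𝓕 t]
        =ᵐ[μ] (fun ω => n t ω * (Nt t + θ + R (t + 1))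
          / ((Nt t + R (t + 1)) * (Nt t + θ))) ∧
      ∀ ω, n t ω * (Nt t + θ + R (t + 1)) / ((Nt t + R (t + 1)) * (Nt t + θ))
          < π t ω :=
  dynamical_pos_share_supermartingale_general μ 𝓕 n π S R Nt θ n₀ hθ hn₀ hR hNt hadapted hmem hSmeas
    hcond hnrec hπ
end
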